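/- arXiv:2306.08470 — 8 statements merged into one kernel-verified Lean document; each statement's English description precedes it below -/
import Mathlib

section
/- Theorem (adversarial guarantee of the primal–dual template, Theorem 3.1). Suppose: (i) [primal regret] there is R_P ≥ 0 such that for every x ∈ X and every p ∈ [0,1], p·∑_{t∈T_G} L_t(x) + (1−p)·∑_{t∈T_G} L_t(x₀) − ∑_{t∈T_G} L_t(x_t) ≤ R_P; (ii) [dual regret] there are R_1, R_2 ≥ 0 such that for every λ ∈ D, ∑_{t∈T_G^{<τ}} (ℓ_t(λ) − ℓ_t(λ_t)) ≤ R_1 and ∑_{t∈T_G^{>τ}} (ℓ_t(λ) − ℓ_t(λ_t)) ≤ R_2. Then, with α := ν/(1+β), it holds that ∑_{t=1}^T f_t(x_t) ≥ α · sup_{x∈X} ∑_{t=1}^T f_t(x) − (2/ν + R_1 + R_2 + R_P). -/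
set_option maxHeartbeats 2000000


/-- Theorem 3.1 (adversarial guarantee of the primal–dual template). With `ν := β + ρ` and
`α := ν/(1+β)`, if the primal regret over `T_G` against mixtures of any `x` and the void
action `x₀` is at most `R_P`, and the dual regret over `T_G^{<τ}` (resp. `T_G^{>τ}`)
against comparators in `D = {λ ⪰ 0 : ‖λ‖₁ ≤ 1/ν}` is at most `R₁` (resp. `R₂`), then
`∑_{t=1}^T f_t(x_t) ≥ α · sup_x ∑_{t=1}^T f_t(x) − (2/ν + R₁ + R₂ + R_P)`. -/
theorem stmt_0 (T m : ℕ) (hT : 1 ≤ T) (hm : 1 ≤ m)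
    (X : Type*) [Nonempty X] (x₀ : X)
    (β ρ : ℝ) (hβ : 0 ≤ β) (hρ0 : 0 < ρ) (hρ1 : ρ ≤ 1)
    (f : ℕ → X → ℝ)
    (hf0 : ∀ t ∈ Finset.Icc 1 T, ∀ x, 0 ≤ f t x)
    (hf1 : ∀ t ∈ Finset.Icc 1 T, ∀ x, f t x ≤ 1)
    (c : ℕ → X → Fin m → ℝ)
    (hc : ∀ t ∈ Finset.Icc 1 T, ∀ x i, |c t x i| ≤ 1)
    (hcx₀ : ∀ t ∈ Finset.Icc 1 T, ∀ i, c t x₀ i ≤ -β)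
    (x : ℕ → X) (lam : ℕ → Fin m → ℝ)
    (hlam : ∀ t ∈ Finset.Icc 1 T, ∀ i, 0 ≤ lam t i)
    (Bud : ℕ → Fin m → ℝ)
    (hB1 : ∀ i, Bud 1 i = T * ρ)
    (hBrec : ∀ t ∈ Finset.Icc 1 T, ∀ i, Bud (t + 1) i = Bud t i - c t (x t) i)
    (T0 TG TGlt TGgt : Finset ℕ) (τ : ℕ)
    (hT0 : ∀ t, t ∈ T0 ↔ t ∈ Finset.Icc 1 T ∧ ∃ i, Bud t i < 1)
    (hTG : TG = Finset.Icc 1 T \ T0)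
    (hτ : τ = T0.sup id)
    (hTGlt : TGlt = TG.filter (fun t => t ≤ τ))
    (hTGgt : TGgt = Finset.Icc (τ + 1) T)
    (hvoid : ∀ t ∈ T0, x t = x₀)
    -- (i) primal regret
    (RP : ℝ) (hRP : 0 ≤ RP)
    (hprimal : ∀ x' : X, ∀ p : ℝ, 0 ≤ p → p ≤ 1 →
      p * (∑ t ∈ TG, (f t x' + ∑ i, lam t i * (ρ - c t x' i)))
        + (1 - p) * (∑ t ∈ TG, (f t x₀ + ∑ i, lam t i * (ρ - c t x₀ i)))
        - ∑ t ∈ TG, (f t (x t) + ∑ i, lam t i * (ρ - c t (x t) i)) ≤ RP)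
    -- (ii) dual regret
    (R1 R2 : ℝ) (hR1 : 0 ≤ R1) (hR2 : 0 ≤ R2)
    (hdual1 : ∀ lam' : Fin m → ℝ, (∀ i, 0 ≤ lam' i) → (∑ i, lam' i) ≤ 1 / (β + ρ) →
      ∑ t ∈ TGlt, ((∑ i, lam' i * (c t (x t) i - ρ)) - ∑ i, lam t i * (c t (x t) i - ρ)) ≤ R1)
    (hdual2 : ∀ lam' : Fin m → ℝ, (∀ i, 0 ≤ lam' i) → (∑ i, lam' i) ≤ 1 / (β + ρ) →
      ∑ t ∈ TGgt, ((∑ i, lam' i * (c t (x t) i - ρ)) - ∑ i, lam t i * (c t (x t) i - ρ)) ≤ R2) :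
    ∑ t ∈ Finset.Icc 1 T, f t (x t) ≥
      ((β + ρ) / (1 + β)) * (⨆ x' : X, ∑ t ∈ Finset.Icc 1 T, f t x')
        - (2 / (β + ρ) + R1 + R2 + RP) := by
    classical
  have hν : (0:ℝ) < β + ρ := by linarith
  have h1T : (1:ℕ) ∈ Finset.Icc 1 T := by simp [hT]
  have hβ1 : β ≤ 1 := by
    have i0 : Fin m := ⟨0, hm⟩
    have h := hc 1 h1T x₀ i0
    have h2 := hcx₀ 1 h1T i0
    linarith [neg_abs_le (c 1 x₀ i0)]
  obtain ⟨α, hαdef⟩ : ∃ a : ℝ, a = (β + ρ) / (1 + β) := ⟨_, rfl⟩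
  rw [show (β + ρ) / (1 + β) = α from hαdef.symm]
  have hα0 : 0 < α := by rw [hαdef]; exact div_pos hν (by linarith)
  have hα1 : α ≤ 1 := by rw [hαdef, div_le_one (by linarith)]; linarith
  have hαβ : α * (1 + β) = β + ρ := by
    rw [hαdef]; field_simp
  -- basic set facts
  have hT0sub : T0 ⊆ Finset.Icc 1 T := fun t ht => ((hT0 t).mp ht).1
  have hTGsub : TG ⊆ Finset.Icc 1 T := by rw [hTG]; exact Finset.sdiff_subset
  have hTGltsub : TGlt ⊆ TG := by rw [hTGlt]; exact Finset.filter_subset _ _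
  have hTGnotT0 : ∀ t ∈ TG, t ∉ T0 := by
    intro t ht; rw [hTG] at ht; exact (Finset.mem_sdiff.mp ht).2
  have hle_τ : ∀ t ∈ T0, t ≤ τ := by
    intro t ht; rw [hτ]; exact Finset.le_sup (f := id) ht
  have hTGgtsub : TGgt ⊆ TG := by
    intro t ht; rw [hTGgt, Finset.mem_Icc] at ht; rw [hTG, Finset.mem_sdiff]
    refine ⟨Finset.mem_Icc.mpr ⟨by omega, ht.2⟩, fun hmem => ?_⟩
    have := hle_τ t hmem; omega
  have hTGunion : TG = TGlt ∪ TGgt := by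
    ext t
    constructor
    · intro ht
      by_cases h : t ≤ τ
      · exact Finset.mem_union_left _ (by rw [hTGlt]; exact Finset.mem_filter.mpr ⟨ht, h⟩)
      · refine Finset.mem_union_right _ ?_
        rw [hTGgt, Finset.mem_Icc]
        have := hTGsub ht; rw [Finset.mem_Icc] at this; omega
    · intro ht
      rcases Finset.mem_union.mp ht with h | h
      · exact hTGltsub h
      · exact hTGgtsub h
  have hTGdisj : Disjoint TGlt TGgt := by
    rw [Finset.disjoint_left]; intro t h1 h2
    rw [hTGlt, Finset.mem_filter] at h1
    rw [hTGgt, Finset.mem_Icc] at h2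
    omega
  have hIccUnion : Finset.Icc 1 T = T0 ∪ TG := by
    rw [hTG, Finset.union_sdiff_of_subset hT0sub]
  have hIccDisj : Disjoint T0 TG := by rw [hTG]; exact Finset.disjoint_sdiff
  -- budget formula
  have hBudEq : ∀ k, k ≤ T → ∀ i, Bud (k + 1) i = T * ρ - ∑ s ∈ Finset.Icc 1 k, c s (x s) i := by
    intro k
    induction k with
    | zero =>
      intro _ i
      rw [show (0:ℕ) + 1 = 1 from rfl, hB1 i]
      simp
    | succ n ih =>
      intro hn i
      rw [Finset.sum_Icc_succ_top (by omega : 1 ≤ n + 1),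
        hBrec (n + 1) (Finset.mem_Icc.mpr ⟨by omega, hn⟩) i, ih (by omega) i]
      ring
  obtain ⟨k, hkdef⟩ : ∃ a : ℝ, a = (T0.card : ℝ) := ⟨_, rfl⟩
  have hknn : 0 ≤ k := by rw [hkdef]; exact Nat.cast_nonneg _
  obtain ⟨Dlt, hDltdef⟩ : ∃ a : ℝ, a = ∑ t ∈ TGlt, ∑ i, lam t i * (c t (x t) i - ρ) := ⟨_, rfl⟩
  obtain ⟨Dgt, hDgtdef⟩ : ∃ a : ℝ, a = ∑ t ∈ TGgt, ∑ i, lam t i * (c t (x t) i - ρ) := ⟨_, rfl⟩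
  -- dual bound on TGgt with λ' = 0
  have hDgt2 : -R2 ≤ Dgt := by
    have h := hdual2 (fun _ => 0) (fun _ => le_rfl)
      (by simp only [Finset.sum_const_zero]; positivity)
    simp only [zero_mul, Finset.sum_const_zero, zero_sub] at h
    rw [Finset.sum_neg_distrib, ← hDgtdef] at h
    linarith
  -- main dual claim
  have hD : k - 2 / (β + ρ) - R1 - R2 ≤ Dlt + Dgt := by
    rcases Finset.eq_empty_or_nonempty T0 with hemp | hne
    · have hk0 : k = 0 := by rw [hkdef, hemp]; simp
      have hDlt2 : -R1 ≤ Dlt := by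
        have h := hdual1 (fun _ => 0) (fun _ => le_rfl)
          (by simp only [Finset.sum_const_zero]; positivity)
        simp only [zero_mul, Finset.sum_const_zero, zero_sub] at h
        rw [Finset.sum_neg_distrib, ← hDltdef] at h
        linarith
      have h2ν : 0 ≤ 2 / (β + ρ) := by positivity
      linarith
    · obtain ⟨b, hbmem, hbeq⟩ := Finset.exists_mem_eq_sup T0 hne id
      have hτmem : τ ∈ T0 := by rw [hτ, hbeq]; exact hbmem
      have hτIcc := Finset.mem_Icc.mp (hT0sub hτmem)
      obtain ⟨i', hi'⟩ := ((hT0 τ).mp hτmem).2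
      have hBτ : Bud τ i' = T * ρ - ∑ s ∈ Finset.Icc 1 (τ - 1), c s (x s) i' := by
        have h := hBudEq (τ - 1) (by omega) i'
        rwa [show τ - 1 + 1 = τ by omega] at h
      have hpart : Finset.Icc 1 (τ - 1) = (T0.erase τ) ∪ TGlt := by
        ext t
        simp only [Finset.mem_Icc, Finset.mem_union, Finset.mem_erase]
        constructor
        · rintro ⟨h1, h2⟩
          have htIcc : t ∈ Finset.Icc 1 T := Finset.mem_Icc.mpr ⟨h1, by omega⟩
          by_cases hmem : t ∈ T0
          · exact Or.inl ⟨by omega, hmem⟩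
          · refine Or.inr ?_
            rw [hTGlt, Finset.mem_filter]
            exact ⟨by rw [hTG, Finset.mem_sdiff]; exact ⟨htIcc, hmem⟩, by omega⟩
        · rintro (⟨hne', hmem⟩ | hmem)
          · have h1 := Finset.mem_Icc.mp (hT0sub hmem)
            have h2 := hle_τ t hmem
            omega
          · rw [hTGlt, Finset.mem_filter] at hmem
            have h1 := Finset.mem_Icc.mp (hTGsub hmem.1)
            have h2 := hTGnotT0 t hmem.1
            have h3 : t ≠ τ := fun h => h2 (h ▸ hτmem)
            omega
      have hpdisj : Disjoint (T0.erase τ) TGlt := by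
        rw [Finset.disjoint_left]
        intro a ha hb
        exact hTGnotT0 a (hTGltsub hb) (Finset.mem_of_mem_erase ha)
      have hc1 : 1 ≤ T0.card := Finset.card_pos.mpr hne
      have hk1 : 1 ≤ k := by rw [hkdef]; exact_mod_cast hc1
      have hcardZ : (TGlt.card : ℤ) = (τ : ℤ) - T0.card := by
        have h1 : (Finset.Icc 1 (τ - 1)).card = τ - 1 := by rw [Nat.card_Icc]; omega
        rw [hpart, Finset.card_union_of_disjoint hpdisj, Finset.card_erase_of_mem hτmem] at h1
        omega
      have hcardR : (TGlt.card : ℝ) = (τ : ℝ) - k := by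
        rw [hkdef]; exact_mod_cast hcardZ
      have hsum0 : ∑ s ∈ T0.erase τ, c s (x s) i' ≤ (k - 1) * (-β) := by
        have h := Finset.sum_le_card_nsmul (T0.erase τ) (fun s => c s (x s) i') (-β) ?_
        · rw [Finset.card_erase_of_mem hτmem, nsmul_eq_mul, Nat.cast_sub hc1] at h
          rw [hkdef]
          simpa using h
        · intro s hs
          have hsT0 := Finset.mem_of_mem_erase hs
          rw [hvoid s hsT0]
          exact hcx₀ s (hT0sub hsT0) i'
      have hsplit : ∑ s ∈ Finset.Icc 1 (τ - 1), c s (x s) i'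
          = ∑ s ∈ T0.erase τ, c s (x s) i' + ∑ s ∈ TGlt, c s (x s) i' := by
        rw [hpart, Finset.sum_union hpdisj]
      have hA : T * ρ - 1 + β * (k - 1) ≤ ∑ s ∈ TGlt, c s (x s) i' := by
        have h2 : T * ρ - (∑ s ∈ T0.erase τ, c s (x s) i' + ∑ s ∈ TGlt, c s (x s) i') < 1 := by
          rw [← hsplit, ← hBτ]; exact hi'
        nlinarith [hsum0]
      -- dual bound on TGlt with λ' = (1/ν) e_{i'}
      have hlt : (1 / (β + ρ)) * ((∑ s ∈ TGlt, c s (x s) i') - (TGlt.card : ℝ) * ρ) - Dlt ≤ R1 := by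
        have h := hdual1 (fun i => if i = i' then 1 / (β + ρ) else 0)
          (fun i => by split <;> positivity)
          (by simp)
        simp only [ite_mul, zero_mul, Finset.sum_ite_eq', Finset.mem_univ, if_true] at h
        rw [Finset.sum_sub_distrib, ← hDltdef, ← Finset.mul_sum, Finset.sum_sub_distrib,
          Finset.sum_const, nsmul_eq_mul] at h
        exact h
      have hmul : (∑ s ∈ TGlt, c s (x s) i') - (TGlt.card : ℝ) * ρ ≤ (β + ρ) * (R1 + Dlt) := by
        have h2 : (1 / (β + ρ)) * ((∑ s ∈ TGlt, c s (x s) i') - (TGlt.card : ℝ) * ρ) ≤ R1 + Dlt := by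
          linarith
        calc (∑ s ∈ TGlt, c s (x s) i') - (TGlt.card : ℝ) * ρ
            = (β + ρ) * ((1 / (β + ρ)) * ((∑ s ∈ TGlt, c s (x s) i') - (TGlt.card : ℝ) * ρ)) := by
              field_simp
          _ ≤ (β + ρ) * (R1 + Dlt) := by
              exact mul_le_mul_of_nonneg_left h2 hν.le
      rw [hcardR] at hmul
      have hτT : (τ : ℝ) ≤ (T : ℝ) := by exact_mod_cast hτIcc.2
      have hgoal2 : -2 ≤ (Dlt + Dgt + R1 + R2 - k) * (β + ρ) := by
        nlinarith [hmul, hA, hDgt2, hβ1, hk1,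
          mul_nonneg hν.le (show (0:ℝ) ≤ Dgt + R2 by linarith),
          mul_nonneg hρ0.le (show (0:ℝ) ≤ (T : ℝ) - (τ : ℝ) by linarith)]
      have h3 : (-2) / (β + ρ) ≤ Dlt + Dgt + R1 + R2 - k := (div_le_iff₀ hν).mpr hgoal2
      have h4 : (-2) / (β + ρ) = -(2 / (β + ρ)) := by ring
      linarith
  -- primal part
  have hmixed : ∀ x' : X, α * ∑ t ∈ TG, f t x' - RP
      ≤ ∑ t ∈ TG, (f t (x t) + ∑ i, lam t i * (ρ - c t (x t) i)) := by
    intro x'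
    have hp := hprimal x' α hα0.le hα1
    have hmix : α * ∑ t ∈ TG, f t x'
        ≤ α * (∑ t ∈ TG, (f t x' + ∑ i, lam t i * (ρ - c t x' i)))
          + (1 - α) * (∑ t ∈ TG, (f t x₀ + ∑ i, lam t i * (ρ - c t x₀ i))) := by
      rw [Finset.mul_sum, Finset.mul_sum, Finset.mul_sum, ← Finset.sum_add_distrib]
      apply Finset.sum_le_sum
      intro t ht
      have htIcc := hTGsub ht
      have hfx₀ := hf0 t htIcc x₀
      have hinner : 0 ≤ α * (∑ i, lam t i * (ρ - c t x' i))
          + (1 - α) * (∑ i, lam t i * (ρ - c t x₀ i)) := by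
        rw [Finset.mul_sum, Finset.mul_sum, ← Finset.sum_add_distrib]
        apply Finset.sum_nonneg
        intro i _
        have hl := hlam t htIcc i
        have hcx := (abs_le.mp (hc t htIcc x' i)).2
        have hcb := hcx₀ t htIcc i
        have hfac : 0 ≤ α * (ρ - c t x' i) + (1 - α) * (ρ - c t x₀ i) := by
          have p1 : 0 ≤ α * (1 - c t x' i) :=
            mul_nonneg hα0.le (by linarith)
          have p2 : 0 ≤ (1 - α) * (-β - c t x₀ i) :=
            mul_nonneg (by linarith) (by linarith)
          have hrw : α * (ρ - c t x' i) + (1 - α) * (ρ - c t x₀ i)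
              = α * (1 - c t x' i) + (1 - α) * (-β - c t x₀ i) + ((ρ + β) - α * (1 + β)) := by
            ring
          rw [hrw]
          linarith
        have p3 := mul_nonneg hl hfac
        have hrw2 : lam t i * (α * (ρ - c t x' i) + (1 - α) * (ρ - c t x₀ i))
            = α * (lam t i * (ρ - c t x' i)) + (1 - α) * (lam t i * (ρ - c t x₀ i)) := by ring
        linarith [hrw2 ▸ p3]
      have p4 := mul_nonneg (show (0:ℝ) ≤ 1 - α by linarith) hfx₀
      have hrw3 : α * (f t x' + ∑ i, lam t i * (ρ - c t x' i))
            + (1 - α) * (f t x₀ + ∑ i, lam t i * (ρ - c t x₀ i))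
          = α * f t x' + (1 - α) * f t x₀
            + (α * (∑ i, lam t i * (ρ - c t x' i))
              + (1 - α) * (∑ i, lam t i * (ρ - c t x₀ i))) := by ring
      rw [hrw3]
      linarith
    linarith
  -- identity : reward on TG equals primal payoff plus dual payoffs
  have hident : ∑ t ∈ TG, f t (x t)
      = (∑ t ∈ TG, (f t (x t) + ∑ i, lam t i * (ρ - c t (x t) i))) + (Dlt + Dgt) := by
    have h1 : Dlt + Dgt = ∑ t ∈ TG, ∑ i, lam t i * (c t (x t) i - ρ) := by
      rw [hDltdef, hDgtdef, hTGunion, Finset.sum_union hTGdisj]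
    have h2 : ∀ t, f t (x t) = (f t (x t) + ∑ i, lam t i * (ρ - c t (x t) i))
        + ∑ i, lam t i * (c t (x t) i - ρ) := by
      intro t
      have h3 : ∑ i, lam t i * (ρ - c t (x t) i) = -∑ i, lam t i * (c t (x t) i - ρ) := by
        rw [← Finset.sum_neg_distrib]
        exact Finset.sum_congr rfl fun i _ => by ring
      rw [h3]; ring
    calc ∑ t ∈ TG, f t (x t)
        = ∑ t ∈ TG, ((f t (x t) + ∑ i, lam t i * (ρ - c t (x t) i))
            + ∑ i, lam t i * (c t (x t) i - ρ)) := Finset.sum_congr rfl fun t _ => h2 t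
      _ = (∑ t ∈ TG, (f t (x t) + ∑ i, lam t i * (ρ - c t (x t) i)))
            + ∑ t ∈ TG, ∑ i, lam t i * (c t (x t) i - ρ) := Finset.sum_add_distrib
      _ = _ := by rw [← h1]
  -- assembling
  have hfx0sum : 0 ≤ ∑ t ∈ T0, f t (x t) :=
    Finset.sum_nonneg fun t ht => hf0 t (hT0sub ht) _
  have hsplitLHS : ∑ t ∈ Finset.Icc 1 T, f t (x t)
      = ∑ t ∈ T0, f t (x t) + ∑ t ∈ TG, f t (x t) := by
    rw [hIccUnion, Finset.sum_union hIccDisj]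
  have hT0f : ∀ x' : X, ∑ t ∈ T0, f t x' ≤ k := by
    intro x'
    have h := Finset.sum_le_card_nsmul T0 (fun t => f t x') 1
      (fun t ht => hf1 t (hT0sub ht) x')
    rw [nsmul_eq_mul, mul_one] at h
    rw [hkdef]
    exact h
  have key : ∀ x' : X, α * ∑ t ∈ Finset.Icc 1 T, f t x'
      ≤ ∑ t ∈ Finset.Icc 1 T, f t (x t) + (2 / (β + ρ) + R1 + R2 + RP) := by
    intro x'
    have h1 := hmixed x'
    have h2 := hT0f x'
    have h3 : ∑ t ∈ Finset.Icc 1 T, f t x' = ∑ t ∈ T0, f t x' + ∑ t ∈ TG, f t x' := by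
      rw [hIccUnion, Finset.sum_union hIccDisj]
    have h3' : α * ∑ t ∈ Finset.Icc 1 T, f t x'
        = α * ∑ t ∈ T0, f t x' + α * ∑ t ∈ TG, f t x' := by rw [h3]; ring
    have h2' : α * ∑ t ∈ T0, f t x' ≤ α * k := mul_le_mul_of_nonneg_left h2 hα0.le
    have h5 : 0 ≤ (1 - α) * k := mul_nonneg (by linarith) hknn
    linarith [hD, hident, hsplitLHS, hfx0sum]
  -- supremum step
  have hS : (⨆ x' : X, ∑ t ∈ Finset.Icc 1 T, f t x')
      ≤ (∑ t ∈ Finset.Icc 1 T, f t (x t) + (2 / (β + ρ) + R1 + R2 + RP)) / α := by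
    apply ciSup_le
    intro x'
    rw [le_div_iff₀ hα0, mul_comm]
    exact key x'
  have hS2 : α * (⨆ x' : X, ∑ t ∈ Finset.Icc 1 T, f t x')
      ≤ ∑ t ∈ Finset.Icc 1 T, f t (x t) + (2 / (β + ρ) + R1 + R2 + RP) := by
    have h := mul_le_mul_of_nonneg_left hS hα0.le
    rwa [mul_div_cancel₀ _ (ne_of_gt hα0)] at h
  linarith
end

section
/- Lemma (budget-depletion lower bound). Suppose T₀ ≠ ∅ and let i* ∈ [m] be a resource with B_{τ,i*} < 1. If E ≥ 0 is such that ∑_{t∈T₀} c_{t,i*}(x₀) ≤ −β·|T₀| + E, then ∑_{t∈T_G^{<τ}} c_{t,i*}(x_t) ≥ B − 2 + β·|T₀| − E. (In the adversarial setting this hypothesis holds with E = 0, since c_{t,i}(x₀) ≤ −β for all t and i.) -/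
/-!
Telescoping the budget recursion gives `B_{τ+1} = B − ∑_{t ≤ τ} c_t(x_t)`. Every round of `T₀`
lies in `[1, τ]` and plays `x₀`, so the sum splits into the sum over `T_G^{<τ}` and the sum of the
void costs over `T₀`. Finally `B_{τ+1} = B_τ − c_τ(x₀) < 1 + 1`, since costs are at least `−1`.
-/

open Finset

theorem eq_sub_sum_Ico_of_succ_eq_sub {G : Type*} [AddCommGroup G] {u a : ℕ → G} {m n : ℕ}
    (hmn : m ≤ n) (h : ∀ t ∈ Ico m n, u (t + 1) = u t - a t) :
    u n = u m - ∑ t ∈ Ico m n, a t := by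
  have hneg : ∑ t ∈ Ico m n, a t = ∑ t ∈ Ico m n, -(u (t + 1) - u t) :=
    sum_congr rfl fun t ht => by rw [h t ht]; abel
  rw [hneg, sum_neg_distrib, sum_Ico_sub u hmn]
  abel

theorem filter_le_sdiff_Icc_eq {S : Finset ℕ} {a τ T : ℕ} (hτT : τ ≤ T) :
    (Icc a T \ S).filter (· ≤ τ) = Icc a τ \ S := by
  ext t
  simp only [mem_filter, mem_sdiff, mem_Icc]
  constructor
  · rintro ⟨⟨⟨h1, -⟩, hS⟩, hτ⟩
    exact ⟨⟨h1, hτ⟩, hS⟩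
  · rintro ⟨⟨h1, hτ⟩, hS⟩
    exact ⟨⟨⟨h1, hτ.trans hτT⟩, hS⟩, hτ⟩

theorem stmt_1_general (T m : ℕ)
    (X : Type*) (x₀ : X)
    (β ρ : ℝ)
    (c : ℕ → X → Fin m → ℝ)
    (hc : ∀ t ∈ Finset.Icc 1 T, ∀ x i, |c t x i| ≤ 1)
    (x : ℕ → X)
    (Bud : ℕ → Fin m → ℝ)
    (hB1 : ∀ i, Bud 1 i = T * ρ)
    (hBrec : ∀ t ∈ Finset.Icc 1 T, ∀ i, Bud (t + 1) i = Bud t i - c t (x t) i)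
    (T0 TG TGlt : Finset ℕ) (τ : ℕ)
    (hT0 : ∀ t, t ∈ T0 ↔ t ∈ Finset.Icc 1 T ∧ ∃ i, Bud t i < 1)
    (hTG : TG = Finset.Icc 1 T \ T0)
    (hτ : τ = T0.sup id)
    (hTGlt : TGlt = TG.filter (fun t => t ≤ τ))
    (hvoid : ∀ t ∈ T0, x t = x₀)
    -- specific hypotheses
    (hne : T0.Nonempty)
    (istar : Fin m) (histar : Bud τ istar < 1)
    (E : ℝ)
    (hvoidcost : ∑ t ∈ T0, c t x₀ istar ≤ -β * T0.card + E) :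
    ∑ t ∈ TGlt, c t (x t) istar ≥ T * ρ - 2 + β * T0.card - E := by
  obtain ⟨τ', hτ'T0, hττ'⟩ := exists_mem_eq_sup T0 hne id
  have hτT0 : τ ∈ T0 := hτ ▸ hττ' ▸ hτ'T0
  have hτIcc : τ ∈ Icc 1 T := ((hT0 τ).1 hτT0).1
  have hT0sub : T0 ⊆ Icc 1 τ := fun t ht =>
    mem_Icc.2 ⟨(mem_Icc.1 ((hT0 t).1 ht).1).1, hτ ▸ le_sup (f := id) ht⟩
  have hbudget : Bud (τ + 1) istar = T * ρ - ∑ t ∈ Icc 1 τ, c t (x t) istar := by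
    rw [← Ico_add_one_right_eq_Icc, ← hB1 istar]
    refine eq_sub_sum_Ico_of_succ_eq_sub (u := (Bud · istar)) (by omega)
      fun t ht => hBrec t ?_ istar
    simp only [mem_Ico, mem_Icc] at ht hτIcc ⊢
    omega
  have hsplit : ∑ t ∈ Icc 1 τ, c t (x t) istar
      = ∑ t ∈ TGlt, c t (x t) istar + ∑ t ∈ T0, c t x₀ istar := by
    rw [hTGlt, hTG, filter_le_sdiff_Icc_eq (mem_Icc.1 hτIcc).2, ← sum_sdiff hT0sub]
    exact congrArg _ (sum_congr rfl fun t ht => by rw [hvoid t ht])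
  have hlast : Bud (τ + 1) istar ≤ Bud τ istar + 1 := by
    rw [hBrec τ hτIcc istar, hvoid τ hτT0]
    linarith [neg_abs_le (c τ x₀ istar), hc τ hτIcc x₀ istar]
  linarith

/-- Lemma (budget-depletion lower bound). If `T₀ ≠ ∅`, `i*` is a resource with
`B_{τ,i*} < 1`, and `∑_{t∈T₀} c_{t,i*}(x₀) ≤ −β·|T₀| + E` for some `E ≥ 0`, then
`∑_{t∈T_G^{<τ}} c_{t,i*}(x_t) ≥ B − 2 + β·|T₀| − E`, where `B = T·ρ`. -/
theorem stmt_1 (T m : ℕ) (hT : 1 ≤ T) (hm : 1 ≤ m)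
    (X : Type*) [Nonempty X] (x₀ : X)
    (β ρ : ℝ) (hβ : 0 ≤ β) (hρ0 : 0 < ρ) (hρ1 : ρ ≤ 1)
    (f : ℕ → X → ℝ)
    (hf0 : ∀ t ∈ Finset.Icc 1 T, ∀ x, 0 ≤ f t x)
    (hf1 : ∀ t ∈ Finset.Icc 1 T, ∀ x, f t x ≤ 1)
    (c : ℕ → X → Fin m → ℝ)
    (hc : ∀ t ∈ Finset.Icc 1 T, ∀ x i, |c t x i| ≤ 1)
    (hcx₀ : ∀ t ∈ Finset.Icc 1 T, ∀ i, c t x₀ i ≤ -β)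
    (x : ℕ → X) (lam : ℕ → Fin m → ℝ)
    (hlam : ∀ t ∈ Finset.Icc 1 T, ∀ i, 0 ≤ lam t i)
    (Bud : ℕ → Fin m → ℝ)
    (hB1 : ∀ i, Bud 1 i = T * ρ)
    (hBrec : ∀ t ∈ Finset.Icc 1 T, ∀ i, Bud (t + 1) i = Bud t i - c t (x t) i)
    (T0 TG TGlt TGgt : Finset ℕ) (τ : ℕ)
    (hT0 : ∀ t, t ∈ T0 ↔ t ∈ Finset.Icc 1 T ∧ ∃ i, Bud t i < 1)
    (hTG : TG = Finset.Icc 1 T \ T0)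
    (hτ : τ = T0.sup id)
    (hTGlt : TGlt = TG.filter (fun t => t ≤ τ))
    (hTGgt : TGgt = Finset.Icc (τ + 1) T)
    (hvoid : ∀ t ∈ T0, x t = x₀)
    -- specific hypotheses
    (hne : T0.Nonempty)
    (istar : Fin m) (histar : Bud τ istar < 1)
    (E : ℝ) (hE : 0 ≤ E)
    (hvoidcost : ∑ t ∈ T0, c t x₀ istar ≤ -β * T0.card + E) :
    ∑ t ∈ TGlt, c t (x t) istar ≥ T * ρ - 2 + β * T0.card - E :=
  stmt_1_general T m X x₀ β ρ c hc x Bud hB1 hBrec T0 TG TGlt τ hT0 hTG hτ hTGlt hvoid hne istar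
    histar E hvoidcost
end

section
/- Lemma (cumulative dual utility lower bound, equations (th14)–(th15_2)). Suppose T₀ ≠ ∅ and there exist a resource i* ∈ [m] and E ≥ 0 with ∑_{t∈T_G^{<τ}} c_{t,i*}(x_t) ≥ B − 2 + β·|T₀| − E. If there are R_1, R_2 ≥ 0 such that for every λ ∈ D, ∑_{t∈T_G^{<τ}} (ℓ_t(λ) − ℓ_t(λ_t)) ≤ R_1 and ∑_{t∈T_G^{>τ}} (ℓ_t(λ) − ℓ_t(λ_t)) ≤ R_2, then ∑_{t∈T_G} ℓ_t(λ_t) ≥ |T₀| − (2+E)/ν − R_1 − R_2. -/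
/-- Lemma (cumulative dual utility lower bound, equations (th14)–(th15_2)). If `T₀ ≠ ∅`,
`∑_{t∈T_G^{<τ}} c_{t,i*}(x_t) ≥ B − 2 + β·|T₀| − E` for some resource `i*` and `E ≥ 0`,
and the dual regret on `T_G^{<τ}` (resp. `T_G^{>τ}`) against comparators in `D` is at most
`R₁` (resp. `R₂`), then `∑_{t∈T_G} ℓ_t(λ_t) ≥ |T₀| − (2+E)/ν − R₁ − R₂`. -/
theorem stmt_3 (T m : ℕ) (hT : 1 ≤ T) (hm : 1 ≤ m)
    (X : Type*) [Nonempty X] (x₀ : X)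
    (β ρ : ℝ) (hβ : 0 ≤ β) (hρ0 : 0 < ρ) (hρ1 : ρ ≤ 1)
    (f : ℕ → X → ℝ)
    (hf0 : ∀ t ∈ Finset.Icc 1 T, ∀ x, 0 ≤ f t x)
    (hf1 : ∀ t ∈ Finset.Icc 1 T, ∀ x, f t x ≤ 1)
    (c : ℕ → X → Fin m → ℝ)
    (hc : ∀ t ∈ Finset.Icc 1 T, ∀ x i, |c t x i| ≤ 1)
    (hcx₀ : ∀ t ∈ Finset.Icc 1 T, ∀ i, c t x₀ i ≤ -β)
    (x : ℕ → X) (lam : ℕ → Fin m → ℝ)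
    (hlam : ∀ t ∈ Finset.Icc 1 T, ∀ i, 0 ≤ lam t i)
    (Bud : ℕ → Fin m → ℝ)
    (hB1 : ∀ i, Bud 1 i = T * ρ)
    (hBrec : ∀ t ∈ Finset.Icc 1 T, ∀ i, Bud (t + 1) i = Bud t i - c t (x t) i)
    (T0 TG TGlt TGgt : Finset ℕ) (τ : ℕ)
    (hT0 : ∀ t, t ∈ T0 ↔ t ∈ Finset.Icc 1 T ∧ ∃ i, Bud t i < 1)
    (hTG : TG = Finset.Icc 1 T \ T0)
    (hτ : τ = T0.sup id)
    (hTGlt : TGlt = TG.filter (fun t => t ≤ τ))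
    (hTGgt : TGgt = Finset.Icc (τ + 1) T)
    (hvoid : ∀ t ∈ T0, x t = x₀)
    -- specific hypotheses
    (hne : T0.Nonempty)
    (istar : Fin m) (E : ℝ) (hE : 0 ≤ E)
    (hspend : ∑ t ∈ TGlt, c t (x t) istar ≥ T * ρ - 2 + β * T0.card - E)
    (R1 R2 : ℝ) (hR1 : 0 ≤ R1) (hR2 : 0 ≤ R2)
    (hdual1 : ∀ lam' : Fin m → ℝ, (∀ i, 0 ≤ lam' i) → (∑ i, lam' i) ≤ 1 / (β + ρ) →
      ∑ t ∈ TGlt, ((∑ i, lam' i * (c t (x t) i - ρ)) - ∑ i, lam t i * (c t (x t) i - ρ)) ≤ R1)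
    (hdual2 : ∀ lam' : Fin m → ℝ, (∀ i, 0 ≤ lam' i) → (∑ i, lam' i) ≤ 1 / (β + ρ) →
      ∑ t ∈ TGgt, ((∑ i, lam' i * (c t (x t) i - ρ)) - ∑ i, lam t i * (c t (x t) i - ρ)) ≤ R2) :
    ∑ t ∈ TG, ∑ i, lam t i * (c t (x t) i - ρ) ≥
      (T0.card : ℝ) - (2 + E) / (β + ρ) - R1 - R2 := by

  have hν : (0:ℝ) < β + ρ := by positivity
  -- τ facts
  have hτT0 : ∀ t ∈ T0, t ≤ τ := by
    intro t ht; rw [hτ]; exact Finset.le_sup (f := id) ht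
  have hτT : τ ≤ T := by
    rw [hτ]; apply Finset.sup_le
    intro t ht
    exact (Finset.mem_Icc.mp ((hT0 t).mp ht).1).2
  have hτ1 : 1 ≤ τ := by
    obtain ⟨t, ht⟩ := hne
    exact le_trans (Finset.mem_Icc.mp ((hT0 t).mp ht).1).1 (hτT0 t ht)
  -- TG splits as TGlt ∪ TGgt
  have hsub : TGgt = TG.filter (fun t => ¬ t ≤ τ) := by
    rw [hTGgt, hTG]
    ext t
    simp only [Finset.mem_filter, Finset.mem_sdiff, Finset.mem_Icc, not_le]
    constructor
    · rintro ⟨h1, h2⟩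
      refine ⟨⟨⟨le_trans hτ1 (Nat.le_of_succ_le h1), h2⟩, ?_⟩, h1⟩
      intro hmem
      exact absurd (hτT0 t hmem) (by omega)
    · rintro ⟨⟨⟨h1, h2⟩, h3⟩, h4⟩
      exact ⟨h4, h2⟩
  have hsum_split : ∑ t ∈ TG, ∑ i, lam t i * (c t (x t) i - ρ)
      = (∑ t ∈ TGlt, ∑ i, lam t i * (c t (x t) i - ρ))
        + ∑ t ∈ TGgt, ∑ i, lam t i * (c t (x t) i - ρ) := by
    rw [hTGlt, hsub]
    exact (Finset.sum_filter_add_sum_filter_not TG _ _).symm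
  -- cardinality bound
  have hdisj : Disjoint TGlt T0 := by
    rw [hTGlt, hTG]
    refine Finset.disjoint_left.mpr ?_
    intro t ht hT0t
    exact (Finset.mem_sdiff.mp (Finset.mem_filter.mp ht).1).2 hT0t
  have hcard : TGlt.card + T0.card ≤ τ := by
    have hsubIcc : TGlt ∪ T0 ⊆ Finset.Icc 1 τ := by
      intro t ht
      rcases Finset.mem_union.mp ht with h | h
      · rw [hTGlt, hTG] at h
        have h1 := Finset.mem_filter.mp h
        have h2 := Finset.mem_Icc.mp (Finset.mem_sdiff.mp h1.1).1
        exact Finset.mem_Icc.mpr ⟨h2.1, h1.2⟩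
      · exact Finset.mem_Icc.mpr ⟨(Finset.mem_Icc.mp ((hT0 t).mp h).1).1, hτT0 t h⟩
    have := Finset.card_le_card hsubIcc
    rwa [Finset.card_union_of_disjoint hdisj, Nat.card_Icc, Nat.add_sub_cancel] at this
  have hcardR : (TGlt.card : ℝ) + T0.card ≤ T := by
    have : TGlt.card + T0.card ≤ T := le_trans hcard hτT
    exact_mod_cast this
  -- instantiate hdual2 with 0
  have hd2 := hdual2 (fun _ => 0) (fun i => le_refl 0) (by simp; positivity)
  simp only [zero_mul, Finset.sum_const_zero, zero_sub, Finset.sum_neg_distrib] at hd2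
  have hS2 : -R2 ≤ ∑ t ∈ TGgt, ∑ i, lam t i * (c t (x t) i - ρ) := by linarith
  -- instantiate hdual1 with (1/ν) e_{istar}
  have hd1 := hdual1 (fun i => if i = istar then 1 / (β + ρ) else 0)
    (fun i => by positivity)
    (by simp [Finset.sum_ite_eq'])
  simp only [ite_mul, zero_mul, Finset.sum_ite_eq', Finset.mem_univ, if_true] at hd1
  rw [Finset.sum_sub_distrib, ← Finset.mul_sum] at hd1
  -- key inequality on the spending sum
  have hkey : ∑ t ∈ TGlt, (c t (x t) istar - ρ) ≥ (β + ρ) * T0.card - (2 + E) := by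
    rw [Finset.sum_sub_distrib, Finset.sum_const, nsmul_eq_mul]
    nlinarith [mul_nonneg hρ0.le (by linarith : (0:ℝ) ≤ T - TGlt.card - T0.card)]
  have hu : (0:ℝ) < 1 / (β + ρ) := by positivity
  have huv : 1 / (β + ρ) * (β + ρ) = 1 := by field_simp
  have hS1 : (T0.card : ℝ) - (2 + E) / (β + ρ) - R1
      ≤ ∑ t ∈ TGlt, ∑ i, lam t i * (c t (x t) i - ρ) := by
    have h1 : 1 / (β + ρ) * ((β + ρ) * T0.card - (2 + E))
        ≤ 1 / (β + ρ) * ∑ t ∈ TGlt, (c t (x t) istar - ρ) :=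
      mul_le_mul_of_nonneg_left hkey hu.le
    have h2 : 1 / (β + ρ) * ((β + ρ) * T0.card - (2 + E))
        = (T0.card : ℝ) - (2 + E) / (β + ρ) := by
      field_simp
    linarith
  rw [hsum_split]
  linarith
end

section
/- Lemma (cumulative primal utility lower bound, equation (th16)). Suppose there is R_P ≥ 0 such that for every x ∈ X and every p ∈ [0,1], p·∑_{t∈T_G} L_t(x) + (1−p)·∑_{t∈T_G} L_t(x₀) − ∑_{t∈T_G} L_t(x_t) ≤ R_P. Then ∑_{t∈T_G} L_t(x_t) ≥ (ν/(1+β)) · sup_{x∈X} ∑_{t=1}^T f_t(x) − |T₀| − R_P. -/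
/-!
Mixing the comparator `x'` with the void action in proportion `p = ν/(1+β)` makes the
Lagrangian term of every good round nonnegative: the comparator costs at most `1` per unit of
`λ`, while the void action refunds at least `β`, and `p·(ρ - 1) + (1 - p)·(ρ + β) = 0`.
Hence `p · ∑_{T_G} f_t(x') ≤ ∑_{T_G} L_t(x_t) + R_P` by the regret hypothesis, and each round
of `T₀` contributes at most `1` to `∑_t f_t(x')`.
-/

open Finset

def lagrangian {X ι : Type*} [Fintype ι] (f : X → ℝ) (c : X → ι → ℝ) (lam : ι → ℝ) (ρ : ℝ)
    (x : X) : ℝ :=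
  f x + ∑ i, lam i * (ρ - c x i)

lemma mix_mul_budget_slack_nonneg {β ρ p l a b : ℝ} (hp : p * (1 + β) = β + ρ) (hp0 : 0 ≤ p)
    (hp1 : p ≤ 1) (hl : 0 ≤ l) (ha : a ≤ 1) (hb : b ≤ -β) :
    0 ≤ p * (l * (ρ - a)) + (1 - p) * (l * (ρ - b)) := by
  calc (0 : ℝ) = l * (p * (ρ - 1) + (1 - p) * (ρ + β)) := by linear_combination l * hp
    _ ≤ p * (l * (ρ - a)) + (1 - p) * (l * (ρ - b)) := by
      nlinarith [mul_le_mul_of_nonneg_left (by linarith : ρ - 1 ≤ ρ - a) (mul_nonneg hp0 hl),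
        mul_le_mul_of_nonneg_left (by linarith : ρ + β ≤ ρ - b)
          (mul_nonneg (sub_nonneg.2 hp1) hl)]

lemma mul_le_mix_lagrangian {X ι : Type*} [Fintype ι] {f : X → ℝ} {c : X → ι → ℝ}
    {lam : ι → ℝ} {β ρ p : ℝ} {x' x₀ : X} (hp : p * (1 + β) = β + ρ) (hp0 : 0 ≤ p) (hp1 : p ≤ 1)
    (hlam : ∀ i, 0 ≤ lam i) (hc : ∀ i, c x' i ≤ 1) (hcx₀ : ∀ i, c x₀ i ≤ -β)
    (hfx₀ : 0 ≤ f x₀) :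
    p * f x' ≤ p * lagrangian f c lam ρ x' + (1 - p) * lagrangian f c lam ρ x₀ := by
  have hslack : 0 ≤ p * ∑ i, lam i * (ρ - c x' i) + (1 - p) * ∑ i, lam i * (ρ - c x₀ i) := by
    rw [mul_sum, mul_sum, ← sum_add_distrib]
    exact sum_nonneg fun i _ => mix_mul_budget_slack_nonneg hp hp0 hp1 (hlam i) (hc i) (hcx₀ i)
  unfold lagrangian
  linarith [mul_nonneg (sub_nonneg.2 hp1) hfx₀]

lemma sum_le_sum_sdiff_add_card {α : Type*} [DecidableEq α] {s t : Finset α} {g : α → ℝ}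
    (hg : ∀ a ∈ s, g a ≤ 1) : ∑ a ∈ s, g a ≤ ∑ a ∈ s \ t, g a + #t := by
  have hinter : ∑ a ∈ s ∩ t, g a ≤ #t :=
    calc ∑ a ∈ s ∩ t, g a ≤ ∑ _a ∈ s ∩ t, (1 : ℝ) :=
          sum_le_sum fun a ha => hg a (mem_of_mem_inter_left ha)
      _ ≤ #t := by simpa using card_le_card inter_subset_right
  rw [← sum_inter_add_sum_sdiff s t]
  linarith

theorem stmt_4_general (T m : ℕ)
    (X : Type*) [Nonempty X] (x₀ : X)
    (β ρ : ℝ) (hβ : 0 ≤ β) (hρ0 : 0 < ρ) (hρ1 : ρ ≤ 1)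
    (f : ℕ → X → ℝ)
    (hf0 : ∀ t ∈ Finset.Icc 1 T, ∀ x, 0 ≤ f t x)
    (hf1 : ∀ t ∈ Finset.Icc 1 T, ∀ x, f t x ≤ 1)
    (c : ℕ → X → Fin m → ℝ)
    (hc : ∀ t ∈ Finset.Icc 1 T, ∀ x i, |c t x i| ≤ 1)
    (hcx₀ : ∀ t ∈ Finset.Icc 1 T, ∀ i, c t x₀ i ≤ -β)
    (x : ℕ → X) (lam : ℕ → Fin m → ℝ)
    (hlam : ∀ t ∈ Finset.Icc 1 T, ∀ i, 0 ≤ lam t i)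
    (T0 TG : Finset ℕ)
    (hTG : TG = Finset.Icc 1 T \ T0)
    -- primal regret hypothesis
    (RP : ℝ)
    (hprimal : ∀ x' : X, ∀ p : ℝ, 0 ≤ p → p ≤ 1 →
      p * (∑ t ∈ TG, (f t x' + ∑ i, lam t i * (ρ - c t x' i)))
        + (1 - p) * (∑ t ∈ TG, (f t x₀ + ∑ i, lam t i * (ρ - c t x₀ i)))
        - ∑ t ∈ TG, (f t (x t) + ∑ i, lam t i * (ρ - c t (x t) i)) ≤ RP) :
    ∑ t ∈ TG, (f t (x t) + ∑ i, lam t i * (ρ - c t (x t) i)) ≥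
      ((β + ρ) / (1 + β)) * (⨆ x' : X, ∑ t ∈ Finset.Icc 1 T, f t x')
        - T0.card - RP := by
  set p := (β + ρ) / (1 + β)
  have hp : p * (1 + β) = β + ρ := div_mul_cancel₀ _ (by positivity)
  have hp0 : 0 ≤ p := by positivity
  have hp1 : p ≤ 1 := (div_le_one (by positivity)).2 (by linarith)
  have hTG_sub : TG ⊆ Icc 1 T := hTG ▸ sdiff_subset
  have hgood (x' : X) : p * ∑ t ∈ TG, f t x' ≤
      p * ∑ t ∈ TG, lagrangian (f t) (c t) (lam t) ρ x'
        + (1 - p) * ∑ t ∈ TG, lagrangian (f t) (c t) (lam t) ρ x₀ := by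
    simp only [mul_sum, ← sum_add_distrib]
    refine sum_le_sum fun t ht => ?_
    have ht := hTG_sub ht
    exact mul_le_mix_lagrangian hp hp0 hp1 (hlam t ht) (fun i => (abs_le.1 (hc t ht x' i)).2)
      (hcx₀ t ht) (hf0 t ht x₀)
  have hbound (x' : X) : p * ∑ t ∈ Icc 1 T, f t x' ≤
      ∑ t ∈ TG, (f t (x t) + ∑ i, lam t i * (ρ - c t (x t) i)) + RP + #T0 := by
    have hsplit := sum_le_sum_sdiff_add_card (t := T0) (hf1 · · x')
    rw [← hTG] at hsplit
    have hmix := hgood x'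
    simp only [lagrangian] at hmix
    linarith [hprimal x' p hp0 hp1, mul_le_mul_of_nonneg_left hsplit hp0,
      mul_le_of_le_one_left (Nat.cast_nonneg (α := ℝ) #T0) hp1]
  rw [Real.mul_iSup_of_nonneg hp0]
  linarith [ciSup_le hbound]

/-- Lemma (cumulative primal utility lower bound, equation (th16)). If the primal regret
over `T_G` against mixtures of any `x` and the void action is at most `R_P`, then
`∑_{t∈T_G} L_t(x_t) ≥ (ν/(1+β)) · sup_x ∑_{t=1}^T f_t(x) − |T₀| − R_P`. -/
theorem stmt_4 (T m : ℕ) (hT : 1 ≤ T) (hm : 1 ≤ m)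
    (X : Type*) [Nonempty X] (x₀ : X)
    (β ρ : ℝ) (hβ : 0 ≤ β) (hρ0 : 0 < ρ) (hρ1 : ρ ≤ 1)
    (f : ℕ → X → ℝ)
    (hf0 : ∀ t ∈ Finset.Icc 1 T, ∀ x, 0 ≤ f t x)
    (hf1 : ∀ t ∈ Finset.Icc 1 T, ∀ x, f t x ≤ 1)
    (c : ℕ → X → Fin m → ℝ)
    (hc : ∀ t ∈ Finset.Icc 1 T, ∀ x i, |c t x i| ≤ 1)
    (hcx₀ : ∀ t ∈ Finset.Icc 1 T, ∀ i, c t x₀ i ≤ -β)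
    (x : ℕ → X) (lam : ℕ → Fin m → ℝ)
    (hlam : ∀ t ∈ Finset.Icc 1 T, ∀ i, 0 ≤ lam t i)
    (Bud : ℕ → Fin m → ℝ)
    (hB1 : ∀ i, Bud 1 i = T * ρ)
    (hBrec : ∀ t ∈ Finset.Icc 1 T, ∀ i, Bud (t + 1) i = Bud t i - c t (x t) i)
    (T0 TG TGlt TGgt : Finset ℕ) (τ : ℕ)
    (hT0 : ∀ t, t ∈ T0 ↔ t ∈ Finset.Icc 1 T ∧ ∃ i, Bud t i < 1)
    (hTG : TG = Finset.Icc 1 T \ T0)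
    (hτ : τ = T0.sup id)
    (hTGlt : TGlt = TG.filter (fun t => t ≤ τ))
    (hTGgt : TGgt = Finset.Icc (τ + 1) T)
    (hvoid : ∀ t ∈ T0, x t = x₀)
    -- primal regret hypothesis
    (RP : ℝ) (hRP : 0 ≤ RP)
    (hprimal : ∀ x' : X, ∀ p : ℝ, 0 ≤ p → p ≤ 1 →
      p * (∑ t ∈ TG, (f t x' + ∑ i, lam t i * (ρ - c t x' i)))
        + (1 - p) * (∑ t ∈ TG, (f t x₀ + ∑ i, lam t i * (ρ - c t x₀ i)))
        - ∑ t ∈ TG, (f t (x t) + ∑ i, lam t i * (ρ - c t (x t) i)) ≤ RP) :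
    ∑ t ∈ TG, (f t (x t) + ∑ i, lam t i * (ρ - c t (x t) i)) ≥
      ((β + ρ) / (1 + β)) * (⨆ x' : X, ∑ t ∈ Finset.Icc 1 T, f t x')
        - T0.card - RP :=
  stmt_4_general T m X x₀ β ρ hβ hρ0 hρ1 f hf0 hf1 c hc hcx₀ x lam hlam T0 TG hTG RP hprimal
end

section
/- Theorem (stochastic guarantee of the primal–dual template, Theorem 4.2, conditional form on the event of Lemma 4.1). Let E ≥ 0 and R_P, R_1, R_2 ≥ 0, and suppose: (a) ∑_{t∈T₀} c_{t,i}(x₀) ≤ −β·|T₀| + M·E for every resource i ∈ [m]; (b) ∫_X ∑_{t∈T_G} ( f_t(x) + ⟨λ_t, ρ·𝟙 − c_t(x)⟩ ) dξ(x) ≥ ∫_X ∑_{t∈T_G} ( f̄(x) + ⟨λ_t, ρ·𝟙 − c̄(x)⟩ ) dξ(x) − M·E; (c) [primal regret] ∫_X ∑_{t∈T_G} L_t(x) dξ(x) − ∑_{t∈T_G} L_t(x_t) ≤ R_P; (d) [dual regret] for every λ ∈ D, ∑_{t∈T_G^{<τ}} (ℓ_t(λ) − ℓ_t(λ_t)) ≤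 R_1 and ∑_{t∈T_G^{>τ}} (ℓ_t(λ) − ℓ_t(λ_t)) ≤ R_2. Then ∑_{t=1}^T f_t(x_t) ≥ T·∫_X f̄ dξ − ( 2/ν + (1 + 1/ν)·M·E + R_1 + R_2 + R_P ). -/
open MeasureTheory

set_option maxHeartbeats 1600000 in
/-- Theorem 4.2 (stochastic guarantee of the primal–dual template, conditional form on the
event of Lemma 4.1). Under the concentration hypotheses (a)–(b), the primal regret bound
(c) against a feasible strategy mixture `ξ` for the expected LP, and the dual regret
bounds (d), it holds that
`∑_{t=1}^T f_t(x_t) ≥ T·∫ f̄ dξ − (2/ν + (1 + 1/ν)·M·E + R₁ + R₂ + R_P)`. -/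
theorem stmt_5 (T m : ℕ) (hT : 1 ≤ T) (hm : 1 ≤ m)
    (X : Type*) [MeasurableSpace X] [Nonempty X] (x₀ : X)
    (β ρ : ℝ) (hβ : 0 ≤ β) (hρ0 : 0 < ρ) (hρ1 : ρ ≤ 1)
    (f : ℕ → X → ℝ)
    (hfm : ∀ t ∈ Finset.Icc 1 T, Measurable (f t))
    (hf0 : ∀ t ∈ Finset.Icc 1 T, ∀ x, 0 ≤ f t x)
    (hf1 : ∀ t ∈ Finset.Icc 1 T, ∀ x, f t x ≤ 1)
    (c : ℕ → X → Fin m → ℝ)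
    (hcm : ∀ t ∈ Finset.Icc 1 T, ∀ i, Measurable (fun x => c t x i))
    (hc : ∀ t ∈ Finset.Icc 1 T, ∀ x i, |c t x i| ≤ 1)
    (hcx₀ : ∀ t ∈ Finset.Icc 1 T, ∀ i, c t x₀ i ≤ -β)
    (x : ℕ → X) (lam : ℕ → Fin m → ℝ)
    (hlam : ∀ t ∈ Finset.Icc 1 T, ∀ i, 0 ≤ lam t i)
    (Bud : ℕ → Fin m → ℝ)
    (hB1 : ∀ i, Bud 1 i = T * ρ)
    (hBrec : ∀ t ∈ Finset.Icc 1 T, ∀ i, Bud (t + 1) i = Bud t i - c t (x t) i)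
    (T0 TG TGlt TGgt : Finset ℕ) (τ : ℕ)
    (hT0 : ∀ t, t ∈ T0 ↔ t ∈ Finset.Icc 1 T ∧ ∃ i, Bud t i < 1)
    (hTG : TG = Finset.Icc 1 T \ T0)
    (hτ : τ = T0.sup id)
    (hTGlt : TGlt = TG.filter (fun t => t ≤ τ))
    (hTGgt : TGgt = Finset.Icc (τ + 1) T)
    (hvoid : ∀ t ∈ T0, x t = x₀)
    -- mean reward/cost functions and a feasible strategy mixture ξ for the expected LP
    (fbar : X → ℝ) (hfbarm : Measurable fbar)
    (hfbar0 : ∀ x', 0 ≤ fbar x') (hfbar1 : ∀ x', fbar x' ≤ 1)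
    (cbar : X → Fin m → ℝ) (hcbarm : ∀ i, Measurable (fun x' => cbar x' i))
    (hcbar : ∀ x' i, |cbar x' i| ≤ 1)
    (ξ : Measure X) [IsProbabilityMeasure ξ]
    (hfeas : ∀ i, ∫ x', cbar x' i ∂ξ ≤ ρ)
    -- bound on the ℓ₁-norm of the multipliers
    (M : ℝ) (hM : 0 ≤ M) (hlamM : ∀ t ∈ Finset.Icc 1 T, (∑ i, lam t i) ≤ M)
    (E RP R1 R2 : ℝ) (hE : 0 ≤ E) (hRP : 0 ≤ RP) (hR1 : 0 ≤ R1) (hR2 : 0 ≤ R2)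
    -- (a) concentration for the void action on T₀
    (ha : ∀ i, ∑ t ∈ T0, c t x₀ i ≤ -β * T0.card + M * E)
    -- (b) concentration of the Lagrangian payoffs under ξ on T_G
    (hb : ∫ x', (∑ t ∈ TG, (f t x' + ∑ i, lam t i * (ρ - c t x' i))) ∂ξ ≥
          (∫ x', (∑ t ∈ TG, (fbar x' + ∑ i, lam t i * (ρ - cbar x' i))) ∂ξ) - M * E)
    -- (c) primal regret against the strategy mixture ξ
    (hc' : (∫ x', (∑ t ∈ TG, (f t x' + ∑ i, lam t i * (ρ - c t x' i))) ∂ξ)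
            - ∑ t ∈ TG, (f t (x t) + ∑ i, lam t i * (ρ - c t (x t) i)) ≤ RP)
    -- (d) dual regret on T_G^{<τ} and T_G^{>τ} against comparators in D
    (hdual1 : ∀ lam' : Fin m → ℝ, (∀ i, 0 ≤ lam' i) → (∑ i, lam' i) ≤ 1 / (β + ρ) →
      ∑ t ∈ TGlt, ((∑ i, lam' i * (c t (x t) i - ρ)) - ∑ i, lam t i * (c t (x t) i - ρ)) ≤ R1)
    (hdual2 : ∀ lam' : Fin m → ℝ, (∀ i, 0 ≤ lam' i) → (∑ i, lam' i) ≤ 1 / (β + ρ) →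
      ∑ t ∈ TGgt, ((∑ i, lam' i * (c t (x t) i - ρ)) - ∑ i, lam t i * (c t (x t) i - ρ)) ≤ R2) :
    ∑ t ∈ Finset.Icc 1 T, f t (x t) ≥
      T * (∫ x', fbar x' ∂ξ)
        - (2 / (β + ρ) + (1 + 1 / (β + ρ)) * M * E + R1 + R2 + RP) := by
  have hν : (0:ℝ) < β + ρ := by linarith
  -- basic set facts
  have hT0sub : T0 ⊆ Finset.Icc 1 T := fun t ht => ((hT0 t).1 ht).1
  have hTGsub : TG ⊆ Finset.Icc 1 T := by rw [hTG]; exact Finset.sdiff_subset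
  have hTGltsub : TGlt ⊆ TG := by rw [hTGlt]; exact Finset.filter_subset _ _
  have hleτ : ∀ t ∈ T0, t ≤ τ := fun t ht => hτ ▸ Finset.le_sup (f := id) ht
  have hτleT : τ ≤ T := hτ ▸ Finset.sup_le
    (fun t ht => (Finset.mem_Icc.mp (hT0sub ht)).2)
  -- integrability helper
  have hint : ∀ (g : X → ℝ), Measurable g → (∀ x', |g x'| ≤ 1) →
      Integrable g ξ := by
    intro g hg hbd
    exact (integrable_const (1:ℝ)).mono' hg.aestronglyMeasurable
      (Filter.Eventually.of_forall (fun a => by simpa using hbd a))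
  have hintf : Integrable fbar ξ := hint fbar hfbarm
    (fun x' => abs_le.mpr ⟨by linarith [hfbar0 x'], hfbar1 x'⟩)
  have hintc : ∀ i, Integrable (fun x' => cbar x' i) ξ :=
    fun i => hint _ (hcbarm i) (fun x' => hcbar x' i)
  have hintg : ∀ t, Integrable (fun x' => ∑ i, lam t i * (ρ - cbar x' i)) ξ :=
    fun t => integrable_finset_sum _ (fun i _ =>
      (((integrable_const ρ).sub (hintc i)).const_mul _))
  -- evaluate the mean-Lagrangian integral
  have hIeq : ∫ x', (∑ t ∈ TG, (fbar x' + ∑ i, lam t i * (ρ - cbar x' i))) ∂ξ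
      = ∑ t ∈ TG, ((∫ x', fbar x' ∂ξ) + ∑ i, lam t i * (ρ - ∫ x', cbar x' i ∂ξ)) := by
    have h0 : ∫ x', (∑ t ∈ TG, (fbar x' + ∑ i, lam t i * (ρ - cbar x' i))) ∂ξ
        = ∑ t ∈ TG, ∫ x', (fbar x' + ∑ i, lam t i * (ρ - cbar x' i)) ∂ξ :=
      integral_finset_sum _ (fun t _ => hintf.add (hintg t))
    rw [h0]
    refine Finset.sum_congr rfl fun t ht => ?_
    have h1 : ∫ x', (fbar x' + ∑ i, lam t i * (ρ - cbar x' i)) ∂ξ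
        = (∫ x', fbar x' ∂ξ) + ∫ x', (∑ i, lam t i * (ρ - cbar x' i)) ∂ξ :=
      integral_add hintf (hintg t)
    have h2 : ∫ x', (∑ i, lam t i * (ρ - cbar x' i)) ∂ξ
        = ∑ i, ∫ x', lam t i * (ρ - cbar x' i) ∂ξ :=
      integral_finset_sum _ (fun i _ => ((integrable_const ρ).sub (hintc i)).const_mul _)
    rw [h1, h2]
    congr 1
    refine Finset.sum_congr rfl fun i _ => ?_
    have h3 : ∫ x', lam t i * (ρ - cbar x' i) ∂ξ
        = lam t i * ∫ x', (ρ - cbar x' i) ∂ξ := integral_const_mul _ _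
    have h4 : ∫ x', (ρ - cbar x' i) ∂ξ
        = (∫ _x', ρ ∂ξ) - ∫ x', cbar x' i ∂ξ :=
      integral_sub (integrable_const ρ) (hintc i)
    rw [h3, h4, integral_const]
    simp
  have hIfbar0 : 0 ≤ ∫ x', fbar x' ∂ξ := integral_nonneg hfbar0
  have hIfbar1 : (∫ x', fbar x' ∂ξ) ≤ 1 := by
    calc (∫ x', fbar x' ∂ξ) ≤ ∫ _x', (1:ℝ) ∂ξ := integral_mono hintf (integrable_const 1) hfbar1
    _ = 1 := by simp
  -- primal bound: ∑_{TG} L_t(x_t) ≥ |TG|·∫fbar − M·E − RP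
  have hL : ∑ t ∈ TG, (f t (x t) + ∑ i, lam t i * (ρ - c t (x t) i))
      ≥ (TG.card : ℝ) * (∫ x', fbar x' ∂ξ) - M * E - RP := by
    have h1 : ∑ t ∈ TG, ((∫ x', fbar x' ∂ξ) + ∑ i, lam t i * (ρ - ∫ x', cbar x' i ∂ξ))
        ≥ (TG.card : ℝ) * (∫ x', fbar x' ∂ξ) := by
      rw [Finset.sum_add_distrib, Finset.sum_const, nsmul_eq_mul]
      have : (0:ℝ) ≤ ∑ t ∈ TG, ∑ i, lam t i * (ρ - ∫ x', cbar x' i ∂ξ) := by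
        refine Finset.sum_nonneg fun t ht => Finset.sum_nonneg fun i _ => ?_
        exact mul_nonneg (hlam t (hTGsub ht) i) (by linarith [hfeas i])
      linarith
    rw [hIeq] at hb
    linarith
  -- dual bound on TGgt with comparator 0
  have hgt : ∑ t ∈ TGgt, ∑ i, lam t i * (c t (x t) i - ρ) ≥ -R2 := by
    have h := hdual2 (fun _ => 0) (fun _ => le_refl 0) (by simp; positivity)
    simp only [zero_mul, Finset.sum_const_zero, zero_sub, Finset.sum_neg_distrib] at h
    linarith
  -- dual bound on TGlt
  have hlt : ∑ t ∈ TGlt, ∑ i, lam t i * (c t (x t) i - ρ)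
      ≥ (T0.card : ℝ) - (2 + M * E) / (β + ρ) - R1 := by
    by_cases hT0e : T0 = ∅
    · have hτ0 : τ = 0 := by rw [hτ, hT0e]; simp
      have hlt0 : TGlt = ∅ := by
        refine Finset.eq_empty_of_forall_notMem fun t ht => ?_
        rw [hTGlt, Finset.mem_filter] at ht
        have h1 := Finset.mem_Icc.mp (hTGsub ht.1)
        omega
      have hpos : (0:ℝ) ≤ (2 + M * E) / (β + ρ) :=
        div_nonneg (by positivity) hν.le
      rw [hlt0, hT0e]
      simp only [Finset.sum_empty, Finset.card_empty, Nat.cast_zero]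
      linarith
    · -- T0 nonempty: set up the binding resource at time τ
      obtain ⟨τ₀, hτ₀mem, hτ₀⟩ := Finset.exists_mem_eq_sup T0
        (Finset.nonempty_iff_ne_empty.mpr hT0e) id
      have hτmem : τ ∈ T0 := by rw [hτ, hτ₀]; exact hτ₀mem
      have h1τ := Finset.mem_Icc.mp (hT0sub hτmem)
      obtain ⟨i0, hi0⟩ := ((hT0 τ).1 hτmem).2
      -- budget telescoping
      have hBud : ∀ k, k ≤ T → ∀ i, Bud (k + 1) i
          = T * ρ - ∑ t ∈ Finset.Icc 1 k, c t (x t) i := by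
        intro k
        induction k with
        | zero => intro _ i; simpa using hB1 i
        | succ n ih =>
          intro h i
          rw [hBrec (n + 1) (Finset.mem_Icc.mpr ⟨by omega, h⟩) i, ih (by omega) i,
            Finset.sum_Icc_succ_top (by omega)]
          ring
      obtain ⟨s, hs⟩ : ∃ s, τ = s + 1 := ⟨τ - 1, by omega⟩
      have hBτ : Bud τ i0 = T * ρ - ∑ t ∈ Finset.Icc 1 s, c t (x t) i0 := by
        rw [hs]; exact hBud s (by omega) i0
      have hsum_s : (T:ℝ) * ρ - 1 < ∑ t ∈ Finset.Icc 1 s, c t (x t) i0 := by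
        rw [hBτ] at hi0; linarith
      have hcτ : (-1:ℝ) ≤ c τ (x τ) i0 :=
        (abs_le.mp (hc τ (hT0sub hτmem) (x τ) i0)).1
      have hsumτ : (T:ℝ) * ρ - 2 < ∑ t ∈ Finset.Icc 1 τ, c t (x t) i0 := by
        have : ∑ t ∈ Finset.Icc 1 τ, c t (x t) i0
            = (∑ t ∈ Finset.Icc 1 s, c t (x t) i0) + c τ (x τ) i0 := by
          rw [hs]; rw [Finset.sum_Icc_succ_top (by omega)]
        rw [this]; linarith
      -- partition Icc 1 τ = T0 ∪ TGlt
      have hpartition : Finset.Icc 1 τ = T0 ∪ TGlt := by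
        ext t
        simp only [Finset.mem_Icc, Finset.mem_union, hTGlt, Finset.mem_filter, hTG,
          Finset.mem_sdiff, Finset.mem_Icc]
        constructor
        · intro ⟨h1, h2⟩
          by_cases ht0 : t ∈ T0
          · exact Or.inl ht0
          · exact Or.inr ⟨⟨⟨h1, le_trans h2 hτleT⟩, ht0⟩, h2⟩
        · rintro (ht0 | ⟨⟨⟨h1, _⟩, _⟩, h2⟩)
          · exact ⟨(Finset.mem_Icc.mp (hT0sub ht0)).1, hleτ t ht0⟩
          · exact ⟨h1, h2⟩
      have hdisj : Disjoint T0 TGlt := by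
        rw [Finset.disjoint_right]
        intro t ht
        rw [hTGlt, Finset.mem_filter, hTG, Finset.mem_sdiff] at ht
        exact ht.1.2
      have hsplit : ∑ t ∈ Finset.Icc 1 τ, c t (x t) i0
          = (∑ t ∈ T0, c t (x t) i0) + ∑ t ∈ TGlt, c t (x t) i0 := by
        rw [hpartition, Finset.sum_union hdisj]
      have hT0sum : ∑ t ∈ T0, c t (x t) i0 ≤ -β * T0.card + M * E := by
        have : ∑ t ∈ T0, c t (x t) i0 = ∑ t ∈ T0, c t x₀ i0 :=
          Finset.sum_congr rfl fun t ht => by rw [hvoid t ht]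
        rw [this]; exact ha i0
      have hTGltsum : (T:ℝ) * ρ - 2 + β * T0.card - M * E
          < ∑ t ∈ TGlt, c t (x t) i0 := by
        rw [hsplit] at hsumτ; linarith
      -- cardinalities
      have hcards : T0.card + TGlt.card = τ := by
        rw [← Finset.card_union_of_disjoint hdisj, ← hpartition, Nat.card_Icc]
        omega
      have hcardle : T0.card ≤ τ := by omega
      -- apply dual regret with the indicator comparator
      set lam' : Fin m → ℝ := fun i => if i = i0 then 1 / (β + ρ) else 0 with hlam'def
      have hlam'nn : ∀ i, 0 ≤ lam' i := by
        intro i; rw [hlam'def]; dsimp only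
        split
        · positivity
        · exact le_refl 0
      have hlam'sum : (∑ i, lam' i) = 1 / (β + ρ) := by
        rw [hlam'def]; simp
      have hd := hdual1 lam' hlam'nn (le_of_eq hlam'sum)
      have hev : ∀ t, (∑ i, lam' i * (c t (x t) i - ρ))
          = (1 / (β + ρ)) * (c t (x t) i0 - ρ) := by
        intro t; rw [hlam'def]
        simp [ite_mul]
      have hd2 : (1 / (β + ρ)) * ((∑ t ∈ TGlt, c t (x t) i0) - ρ * TGlt.card) - R1
          ≤ ∑ t ∈ TGlt, ∑ i, lam t i * (c t (x t) i - ρ) := by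
        have : ∑ t ∈ TGlt, ((1 / (β + ρ)) * (c t (x t) i0 - ρ)
              - ∑ i, lam t i * (c t (x t) i - ρ)) ≤ R1 := by
          refine le_trans (le_of_eq ?_) hd
          exact (Finset.sum_congr rfl fun t _ => by rw [hev t]).symm
        rw [Finset.sum_sub_distrib, ← Finset.mul_sum, Finset.sum_sub_distrib,
          Finset.sum_const, nsmul_eq_mul, mul_comm (TGlt.card : ℝ) ρ] at this
        linarith
      -- final arithmetic
      have hρτ : ρ * (τ:ℝ) ≤ ρ * T := by
        apply mul_le_mul_of_nonneg_left _ hρ0.le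
        exact_mod_cast hτleT
      have hKcast : (TGlt.card : ℝ) = (τ:ℝ) - T0.card := by
        have : (T0.card:ℝ) + TGlt.card = (τ:ℝ) := by exact_mod_cast hcards
        linarith
      have hmain : (β + ρ) * (T0.card:ℝ) - (2 + M * E)
          ≤ (∑ t ∈ TGlt, c t (x t) i0) - ρ * TGlt.card := by
        rw [hKcast]; nlinarith
      have hfin : (T0.card : ℝ) - (2 + M * E) / (β + ρ)
          ≤ (1 / (β + ρ)) * ((∑ t ∈ TGlt, c t (x t) i0) - ρ * TGlt.card) := by
        have h2 : (1 / (β + ρ)) * ((∑ t ∈ TGlt, c t (x t) i0) - ρ * TGlt.card)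
            - ((T0.card : ℝ) - (2 + M * E) / (β + ρ))
            = (1 / (β + ρ)) * (((∑ t ∈ TGlt, c t (x t) i0) - ρ * TGlt.card)
              - ((β + ρ) * (T0.card:ℝ) - (2 + M * E))) := by
          field_simp
        have h3 : (0:ℝ) ≤ (1 / (β + ρ)) * (((∑ t ∈ TGlt, c t (x t) i0) - ρ * TGlt.card)
              - ((β + ρ) * (T0.card:ℝ) - (2 + M * E))) :=
          mul_nonneg (by positivity) (by linarith)
        linarith
      linarith
  -- decompose TG into TGlt ∪ TGgt
  have hTGdec : TG = TGlt ∪ TGgt := by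
    ext t
    simp only [Finset.mem_union, hTGlt, Finset.mem_filter, hTGgt, Finset.mem_Icc, hTG,
      Finset.mem_sdiff, Finset.mem_Icc]
    constructor
    · intro ht
      rcases le_or_gt t τ with h | h
      · exact Or.inl ⟨ht, h⟩
      · exact Or.inr ⟨by omega, ht.1.2⟩
    · rintro (⟨h1, _⟩ | ⟨h1, h2⟩)
      · exact h1
      · exact ⟨⟨by omega, h2⟩, fun ht0 => by have := hleτ t ht0; omega⟩
  have hdisj2 : Disjoint TGlt TGgt := by
    rw [Finset.disjoint_left]
    intro t ht ht'
    rw [hTGlt, Finset.mem_filter] at ht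
    rw [hTGgt, Finset.mem_Icc] at ht'
    omega
  -- combine
  have hflip : ∀ t, (∑ i, lam t i * (c t (x t) i - ρ))
      + (∑ i, lam t i * (ρ - c t (x t) i)) = 0 := by
    intro t
    rw [← Finset.sum_add_distrib]
    exact Finset.sum_eq_zero fun i _ => by ring
  have hfTG : ∑ t ∈ TG, f t (x t)
      = (∑ t ∈ TG, (f t (x t) + ∑ i, lam t i * (ρ - c t (x t) i)))
        + ((∑ t ∈ TGlt, ∑ i, lam t i * (c t (x t) i - ρ))
          + ∑ t ∈ TGgt, ∑ i, lam t i * (c t (x t) i - ρ)) := by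
    rw [← Finset.sum_union hdisj2, ← hTGdec, ← Finset.sum_add_distrib]
    refine Finset.sum_congr rfl fun t _ => ?_
    have := hflip t; linarith
  have hsubsum : ∑ t ∈ TG, f t (x t) ≤ ∑ t ∈ Finset.Icc 1 T, f t (x t) :=
    Finset.sum_le_sum_of_subset_of_nonneg hTGsub (fun t ht _ => hf0 t ht (x t))
  -- cardinality: |TG| + |T0| = T
  have hcardTG : TG.card + T0.card = T := by
    rw [hTG, Finset.card_sdiff_of_subset hT0sub, Nat.card_Icc]
    have := Finset.card_le_card hT0sub
    rw [Nat.card_Icc] at this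
    omega
  have hcardTGr : (TG.card : ℝ) = (T:ℝ) - T0.card := by
    have : (TG.card:ℝ) + T0.card = (T:ℝ) := by exact_mod_cast hcardTG
    linarith
  have hcardbound : (TG.card : ℝ) * (∫ x', fbar x' ∂ξ) + T0.card
      ≥ (T:ℝ) * (∫ x', fbar x' ∂ξ) := by
    rw [hcardTGr]
    have hN : (0:ℝ) ≤ (T0.card : ℝ) := Nat.cast_nonneg _
    have hNI : (T0.card:ℝ) * (∫ x', fbar x' ∂ξ) ≤ (T0.card:ℝ) :=
      mul_le_of_le_one_right hN hIfbar1
    have hexp : ((T:ℝ) - T0.card) * (∫ x', fbar x' ∂ξ)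
        = (T:ℝ) * (∫ x', fbar x' ∂ξ) - (T0.card:ℝ) * (∫ x', fbar x' ∂ξ) := by ring
    linarith
  have harith : 2 / (β + ρ) + (1 + 1 / (β + ρ)) * M * E
      = M * E + (2 + M * E) / (β + ρ) := by
    field_simp; ring
  linarith
end

section
/- Corollary (adversarial guarantee with known replenishment factor, Corollary 5.3, adversarial case). Let 0 < ν̃ ≤ ν and E_P ≥ 0. Suppose: (i) [primal regret, with payoffs rescaled from range [0, 4/ν̃]] for every x ∈ X and every p ∈ [0,1], p·∑_{t∈T_G} L_t(x) + (1−p)·∑_{t∈T_G} L_t(x₀) − ∑_{t∈T_G} L_t(x_t) ≤ (4/ν̃)·E_P; (ii) [dual regret of generalized fixed share on the scaled simplex] for every λ ∈ D, ∑_{t∈T_G^{<τ}} (ℓ_t(λ) − ℓ_t(λ_t)) ≤ (2/ν̃)·√(T·log(2mT)) and ∑_{t∈T_G^{>τ}} (ℓ_t(λ) − ℓ_t(λ_t)) ≤ (2/ν̃)·√(T·log(2mT)). Then, with α := ν/(1+β), ∑_{t=1}^T f_t(x_t) ≥ α · sup_{x∈X} ∑_{t=1}^T f_t(x) − ( 2/ν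 + (4/ν̃)·√(T·log(2mT)) + (4/ν̃)·E_P ). -/
set_option maxHeartbeats 1000000 in
/-- Corollary 5.3 (adversarial case, known replenishment factor). With `0 < ν̃ ≤ ν`,
primal regret at most `(4/ν̃)·E_P` (payoffs rescaled from range `[0, 4/ν̃]`) and dual
regret of generalized fixed share at most `(2/ν̃)·√(T·log(2mT))` on each of `T_G^{<τ}`
and `T_G^{>τ}`, the reward satisfies
`∑_t f_t(x_t) ≥ α·sup_x ∑_t f_t(x) − (2/ν + (4/ν̃)√(T log(2mT)) + (4/ν̃)E_P)`. -/
theorem stmt_9 (T m : ℕ) (hT : 1 ≤ T) (hm : 1 ≤ m)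
    (X : Type*) [Nonempty X] (x₀ : X)
    (β ρ : ℝ) (hβ : 0 ≤ β) (hρ0 : 0 < ρ) (hρ1 : ρ ≤ 1)
    (f : ℕ → X → ℝ)
    (hf0 : ∀ t ∈ Finset.Icc 1 T, ∀ x, 0 ≤ f t x)
    (hf1 : ∀ t ∈ Finset.Icc 1 T, ∀ x, f t x ≤ 1)
    (c : ℕ → X → Fin m → ℝ)
    (hc : ∀ t ∈ Finset.Icc 1 T, ∀ x i, |c t x i| ≤ 1)
    (hcx₀ : ∀ t ∈ Finset.Icc 1 T, ∀ i, c t x₀ i ≤ -β)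
    (x : ℕ → X) (lam : ℕ → Fin m → ℝ)
    (hlam : ∀ t ∈ Finset.Icc 1 T, ∀ i, 0 ≤ lam t i)
    (Bud : ℕ → Fin m → ℝ)
    (hB1 : ∀ i, Bud 1 i = T * ρ)
    (hBrec : ∀ t ∈ Finset.Icc 1 T, ∀ i, Bud (t + 1) i = Bud t i - c t (x t) i)
    (T0 TG TGlt TGgt : Finset ℕ) (τ : ℕ)
    (hT0 : ∀ t, t ∈ T0 ↔ t ∈ Finset.Icc 1 T ∧ ∃ i, Bud t i < 1)
    (hTG : TG = Finset.Icc 1 T \ T0)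
    (hτ : τ = T0.sup id)
    (hTGlt : TGlt = TG.filter (fun t => t ≤ τ))
    (hTGgt : TGgt = Finset.Icc (τ + 1) T)
    (hvoid : ∀ t ∈ T0, x t = x₀)
    -- known lower bound ν̃ on ν, and primal regret parameter E_P
    (ν' EP : ℝ) (hν'0 : 0 < ν') (hν' : ν' ≤ β + ρ) (hEP : 0 ≤ EP)
    -- (i) primal regret with payoffs rescaled from range [0, 4/ν̃]
    (hprimal : ∀ x' : X, ∀ p : ℝ, 0 ≤ p → p ≤ 1 →
      p * (∑ t ∈ TG, (f t x' + ∑ i, lam t i * (ρ - c t x' i)))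
        + (1 - p) * (∑ t ∈ TG, (f t x₀ + ∑ i, lam t i * (ρ - c t x₀ i)))
        - ∑ t ∈ TG, (f t (x t) + ∑ i, lam t i * (ρ - c t (x t) i)) ≤ (4 / ν') * EP)
    -- (ii) dual regret of generalized fixed share
    (hdual1 : ∀ lam' : Fin m → ℝ, (∀ i, 0 ≤ lam' i) → (∑ i, lam' i) ≤ 1 / (β + ρ) →
      ∑ t ∈ TGlt, ((∑ i, lam' i * (c t (x t) i - ρ)) - ∑ i, lam t i * (c t (x t) i - ρ))
        ≤ (2 / ν') * Real.sqrt (T * Real.log (2 * m * T)))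
    (hdual2 : ∀ lam' : Fin m → ℝ, (∀ i, 0 ≤ lam' i) → (∑ i, lam' i) ≤ 1 / (β + ρ) →
      ∑ t ∈ TGgt, ((∑ i, lam' i * (c t (x t) i - ρ)) - ∑ i, lam t i * (c t (x t) i - ρ))
        ≤ (2 / ν') * Real.sqrt (T * Real.log (2 * m * T))) :
    ∑ t ∈ Finset.Icc 1 T, f t (x t) ≥
      ((β + ρ) / (1 + β)) * (⨆ x' : X, ∑ t ∈ Finset.Icc 1 T, f t x')
        - (2 / (β + ρ) + (4 / ν') * Real.sqrt (T * Real.log (2 * m * T)) + (4 / ν') * EP) := by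
  have hν : (0:ℝ) < β + ρ := by linarith
  have h1β : (0:ℝ) < 1 + β := by linarith
  set α : ℝ := (β + ρ) / (1 + β) with hαdef
  have hα0 : 0 < α := div_pos hν h1β
  have hα1 : α ≤ 1 := by rw [hαdef, div_le_one h1β]; linarith
  have hαν : α * (1 + β) = β + ρ := div_mul_cancel₀ _ (ne_of_gt h1β)
  clear_value α
  have h1T : (1:ℕ) ∈ Finset.Icc 1 T := Finset.mem_Icc.mpr ⟨le_refl 1, hT⟩
  have i0 : Fin m := ⟨0, hm⟩
  have hβ1 : β ≤ 1 := by
    have h1 := hcx₀ 1 h1T i0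
    have h2 := (abs_le.mp (hc 1 h1T x₀ i0)).1
    linarith
  have hRD0 : 0 ≤ (2 / ν') * Real.sqrt (T * Real.log (2 * m * T)) :=
    mul_nonneg (by positivity) (Real.sqrt_nonneg _)
  have hRP0 : 0 ≤ (4 / ν') * EP := mul_nonneg (by positivity) hEP
  have hT0sub : T0 ⊆ Finset.Icc 1 T := fun t ht => ((hT0 t).mp ht).1
  have hTGsub : TG ⊆ Finset.Icc 1 T := by rw [hTG]; exact Finset.sdiff_subset
  have hleτ : ∀ t ∈ T0, t ≤ τ := fun t ht => by rw [hτ]; exact Finset.le_sup (f := id) ht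
  -- splitting TG
  have hTGunion : TG = TGlt ∪ TGgt := by
    rw [hTGlt, hTGgt]
    ext t
    simp only [Finset.mem_union, Finset.mem_filter, Finset.mem_Icc]
    constructor
    · intro ht
      rcases le_or_gt t τ with h | h
      · exact Or.inl ⟨ht, h⟩
      · right
        have := Finset.mem_Icc.mp (hTGsub ht)
        omega
    · rintro (⟨ht, _⟩ | ⟨h1, h2⟩)
      · exact ht
      · rw [hTG, Finset.mem_sdiff]
        refine ⟨Finset.mem_Icc.mpr ⟨by omega, h2⟩, fun hmem => ?_⟩
        have := hleτ t hmem; omega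
  have hTGdisj : Disjoint TGlt TGgt := by
    rw [hTGlt, hTGgt, Finset.disjoint_left]
    intro t ht ht'
    rw [Finset.mem_filter] at ht
    rw [Finset.mem_Icc] at ht'
    omega
  have hsumd : ∑ t ∈ TG, ∑ i, lam t i * (c t (x t) i - ρ)
      = ∑ t ∈ TGlt, ∑ i, lam t i * (c t (x t) i - ρ)
        + ∑ t ∈ TGgt, ∑ i, lam t i * (c t (x t) i - ρ) := by
    rw [hTGunion]; exact Finset.sum_union hTGdisj
  -- dual on TGgt with lam' = 0
  have hd2 : -(∑ t ∈ TGgt, ∑ i, lam t i * (c t (x t) i - ρ))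
      ≤ (2 / ν') * Real.sqrt (T * Real.log (2 * m * T)) := by
    have h := hdual2 (fun _ => 0) (fun i => le_refl 0)
      (by simp only [Finset.sum_const_zero]; positivity)
    simpa [Finset.sum_neg_distrib] using h
  -- the main lower bound on the "lost" part
  have hmain : -(α * (T0.card : ℝ)) + ∑ t ∈ TGlt, ∑ i, lam t i * (c t (x t) i - ρ)
      ≥ -(2 / (β + ρ)) - (2 / ν') * Real.sqrt (T * Real.log (2 * m * T)) := by
    rcases Finset.eq_empty_or_nonempty T0 with hne | hne
    · -- T0 empty
      have hk0 : (T0.card : ℝ) = 0 := by rw [hne]; simp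
      have hτ0 : τ = 0 := by rw [hτ, hne]; simp
      have hTGlt0 : TGlt = ∅ := by
        rw [hTGlt, Finset.filter_eq_empty_iff]
        intro t ht
        have := Finset.mem_Icc.mp (hTGsub ht)
        omega
      rw [hk0, hTGlt0]
      have h2ν : 0 < 2 / (β + ρ) := by positivity
      simp only [Finset.sum_empty, mul_zero, neg_zero, add_zero]
      linarith
    · -- T0 nonempty : budget argument
      obtain ⟨τ', hτ'mem, hτ'eq⟩ := Finset.exists_mem_eq_sup T0 hne id
      have hτmem : τ ∈ T0 := by rw [hτ, hτ'eq]; exact hτ'mem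
      obtain ⟨hτIcc, istar, hBlt⟩ := (hT0 τ).mp hτmem
      rw [Finset.mem_Icc] at hτIcc
      obtain ⟨hτ1, hτT⟩ := hτIcc
      -- budget telescoping
      have hBud : ∀ j, j ≤ T → ∀ i, Bud (j+1) i
          = T * ρ - ∑ t ∈ Finset.Icc 1 j, c t (x t) i := by
        intro j
        induction j with
        | zero => intro _ i; simp [hB1 i]
        | succ n ih =>
          intro hn i
          have hmem : n + 1 ∈ Finset.Icc 1 T := Finset.mem_Icc.mpr ⟨by omega, hn⟩
          rw [hBrec (n+1) hmem i, ih (by omega) i,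
            Finset.sum_Icc_succ_top (by omega : 1 ≤ n + 1)]
          ring
      have hτeq : τ - 1 + 1 = τ := by omega
      have hBform := hBud (τ - 1) (by omega) istar
      rw [hτeq] at hBform
      have hSgt : T * ρ - 1 < ∑ t ∈ Finset.Icc 1 (τ - 1), c t (x t) istar := by
        rw [hBform] at hBlt; linarith
      -- split Icc 1 (τ-1)
      have hdisj2 : Disjoint TGlt (T0.erase τ) := by
        rw [Finset.disjoint_left]
        intro t ht ht'
        rw [hTGlt, Finset.mem_filter, hTG, Finset.mem_sdiff] at ht
        exact ht.1.2 (Finset.mem_of_mem_erase ht')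
      have hsplitIcc : Finset.Icc 1 (τ - 1) = TGlt ∪ T0.erase τ := by
        ext t
        simp only [Finset.mem_Icc, Finset.mem_union, hTGlt, Finset.mem_filter, hTG,
          Finset.mem_sdiff, Finset.mem_erase]
        constructor
        · rintro ⟨h1, h2⟩
          by_cases ht0 : t ∈ T0
          · exact Or.inr ⟨by omega, ht0⟩
          · exact Or.inl ⟨⟨⟨h1, by omega⟩, ht0⟩, by omega⟩
        · rintro (⟨⟨⟨h1, h2⟩, hnt⟩, h3⟩ | ⟨h1, h2⟩)
          · have : t ≠ τ := fun h => hnt (h ▸ hτmem)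
            omega
          · have h3 := hleτ t h2
            have h4 := Finset.mem_Icc.mp (hT0sub h2)
            omega
      have hsum_split : ∑ t ∈ Finset.Icc 1 (τ - 1), c t (x t) istar
          = ∑ t ∈ TGlt, c t (x t) istar + ∑ t ∈ T0.erase τ, c t (x t) istar := by
        rw [hsplitIcc, Finset.sum_union hdisj2]
      have hT0bound : ∑ t ∈ T0.erase τ, c t (x t) istar ≤ ((T0.erase τ).card : ℝ) * (-β) := by
        have h := Finset.sum_le_card_nsmul (T0.erase τ) (fun t => c t (x t) istar) (-β)
          (fun t ht => by
            have htT0 := Finset.mem_of_mem_erase ht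
            show c t (x t) istar ≤ -β
            rw [hvoid t htT0]
            exact hcx₀ t (hT0sub htT0) istar)
        rwa [nsmul_eq_mul] at h
      -- cardinalities
      have hk1 : 1 ≤ T0.card := Finset.card_pos.mpr hne
      have herase_card : (T0.erase τ).card = T0.card - 1 := Finset.card_erase_of_mem hτmem
      have hcard : TGlt.card + (T0.erase τ).card = τ - 1 := by
        rw [← Finset.card_union_of_disjoint hdisj2, ← hsplitIcc, Nat.card_Icc]
        omega
      have hgk : (TGlt.card : ℝ) + (T0.card : ℝ) = (τ : ℝ) := by
        have h : TGlt.card + T0.card = τ := by omega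
        exact_mod_cast h
      have hkm1 : ((T0.erase τ).card : ℝ) = (T0.card : ℝ) - 1 := by
        rw [herase_card]
        push_cast [hk1]
        ring
      have hτTR : (τ : ℝ) ≤ (T : ℝ) := Nat.cast_le.mpr hτT
      -- dual on TGlt with lam' = (1/(β+ρ)) e_istar
      have hnn : ∀ i : Fin m, 0 ≤ (if i = istar then 1 / (β + ρ) else 0) := by
        intro i
        by_cases h : i = istar <;> simp [h] <;> positivity
      have hsum1 : (∑ i : Fin m, (if i = istar then 1 / (β + ρ) else 0)) = 1 / (β + ρ) := by
        simp
      have hd1 := hdual1 (fun i => if i = istar then 1 / (β + ρ) else 0) hnn (le_of_eq hsum1)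
      simp only [ite_mul, zero_mul, Finset.sum_ite_eq', Finset.mem_univ, if_true] at hd1
      rw [Finset.sum_sub_distrib, ← Finset.mul_sum] at hd1
      -- hd1 : 1/(β+ρ) * ∑_{TGlt} (c - ρ) - ∑_{TGlt} d ≤ RD
      have hc_split : ∑ t ∈ TGlt, (c t (x t) istar - ρ)
          = (∑ t ∈ TGlt, c t (x t) istar) - (TGlt.card : ℝ) * ρ := by
        rw [Finset.sum_sub_distrib, Finset.sum_const, nsmul_eq_mul]
      have hSc : T * ρ - 1 + β * ((T0.card : ℝ) - 1) ≤ ∑ t ∈ TGlt, c t (x t) istar := by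
        have h1 : ∑ t ∈ T0.erase τ, c t (x t) istar ≤ ((T0.card : ℝ) - 1) * (-β) := by
          rw [← hkm1]; exact hT0bound
        nlinarith [hsum_split, hSgt]
      -- key real inequality
      have hkR0 : (0:ℝ) ≤ (T0.card : ℝ) := Nat.cast_nonneg _
      set Sc : ℝ := ∑ t ∈ TGlt, c t (x t) istar with hScdef
      set kR : ℝ := (T0.card : ℝ) with hkRdef
      set gR : ℝ := (TGlt.card : ℝ) with hgRdef
      clear_value Sc kR gR
      have hmul : α * kR * (β + ρ) - 2 ≤ Sc - gR * ρ := by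
        nlinarith [mul_nonneg hρ0.le (show (0:ℝ) ≤ (T : ℝ) - gR - kR by linarith),
          mul_nonneg (mul_nonneg hkR0 hν.le) (show (0:ℝ) ≤ 1 - α by linarith)]
      have hdiv : α * kR - 2 / (β + ρ)
          ≤ (1 / (β + ρ)) * (Sc - gR * ρ) := by
        rw [← sub_nonneg]
        have heq : (1 / (β + ρ)) * (Sc - gR * ρ)
            - (α * kR - 2 / (β + ρ))
            = ((Sc - gR * ρ)
                - (α * kR * (β + ρ) - 2)) / (β + ρ) := by
          field_simp
        rw [heq]
        exact div_nonneg (by linarith) hν.le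
      rw [hc_split] at hd1
      linarith
  -- per-comparator bound
  have key : ∀ x' : X, α * ∑ t ∈ Finset.Icc 1 T, f t x'
      ≤ ∑ t ∈ Finset.Icc 1 T, f t (x t)
        + (2 / (β + ρ) + (4 / ν') * Real.sqrt (T * Real.log (2 * m * T)) + (4 / ν') * EP) := by
    intro x'
    have hp := hprimal x' α hα0.le hα1
    -- mixture bound
    have hmixsum : α * ∑ t ∈ TG, f t x'
        ≤ α * (∑ t ∈ TG, (f t x' + ∑ i, lam t i * (ρ - c t x' i)))
          + (1 - α) * (∑ t ∈ TG, (f t x₀ + ∑ i, lam t i * (ρ - c t x₀ i))) := by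
      rw [Finset.mul_sum, Finset.mul_sum, Finset.mul_sum, ← Finset.sum_add_distrib]
      refine Finset.sum_le_sum ?_
      intro t ht
      have htI := hTGsub ht
      have hf0' := hf0 t htI x₀
      have hin : 0 ≤ ∑ i, (α * (lam t i * (ρ - c t x' i))
          + (1 - α) * (lam t i * (ρ - c t x₀ i))) := by
        refine Finset.sum_nonneg fun i _ => ?_
        have hl := hlam t htI i
        have hcu := (abs_le.mp (hc t htI x' i)).2
        have hc0 := hcx₀ t htI i
        have hfeas : 0 ≤ ρ - (α * c t x' i + (1 - α) * c t x₀ i) := by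
          nlinarith [mul_le_mul_of_nonneg_left hcu hα0.le,
            mul_le_mul_of_nonneg_left hc0 (show (0:ℝ) ≤ 1 - α by linarith)]
        nlinarith [mul_nonneg hl hfeas]
      calc α * f t x' ≤ α * f t x' + (1 - α) * f t x₀
            + ∑ i, (α * (lam t i * (ρ - c t x' i)) + (1 - α) * (lam t i * (ρ - c t x₀ i))) := by
            nlinarith [mul_nonneg (show (0:ℝ) ≤ 1 - α by linarith) hf0']
        _ = α * (f t x' + ∑ i, lam t i * (ρ - c t x' i))
            + (1 - α) * (f t x₀ + ∑ i, lam t i * (ρ - c t x₀ i)) := by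
            rw [Finset.sum_add_distrib, ← Finset.mul_sum, ← Finset.mul_sum]; ring
    -- rewrite the learner Lagrangian sum
    have hL : ∑ t ∈ TG, (f t (x t) + ∑ i, lam t i * (ρ - c t (x t) i))
        = ∑ t ∈ TG, f t (x t) - ∑ t ∈ TG, ∑ i, lam t i * (c t (x t) i - ρ) := by
      rw [Finset.sum_add_distrib, sub_eq_add_neg, ← Finset.sum_neg_distrib]
      congr 1
      refine Finset.sum_congr rfl fun t _ => ?_
      rw [← Finset.sum_neg_distrib]
      exact Finset.sum_congr rfl fun i _ => by ring
    rw [hL] at hp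
    -- counting the T0 rounds in the comparator
    have hfx'TG : ∑ t ∈ TG, f t x'
        = ∑ t ∈ Finset.Icc 1 T, f t x' - ∑ t ∈ T0, f t x' := by
      rw [hTG, Finset.sum_sdiff_eq_sub hT0sub]
    have hT0f : ∑ t ∈ T0, f t x' ≤ (T0.card : ℝ) := by
      have h := Finset.sum_le_card_nsmul T0 (fun t => f t x') 1
        (fun t ht => hf1 t (hT0sub ht) x')
      simpa using h
    have hcomp : α * (∑ t ∈ Finset.Icc 1 T, f t x') - α * (T0.card : ℝ)
        ≤ α * ∑ t ∈ TG, f t x' := by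
      have h1 : ∑ t ∈ Finset.Icc 1 T, f t x' - (T0.card : ℝ) ≤ ∑ t ∈ TG, f t x' := by
        rw [hfx'TG]; linarith
      have h2 := mul_le_mul_of_nonneg_left h1 hα0.le
      rw [mul_sub] at h2
      exact h2
    have hfx0 : ∑ t ∈ TG, f t (x t) ≤ ∑ t ∈ Finset.Icc 1 T, f t (x t) :=
      Finset.sum_le_sum_of_subset_of_nonneg hTGsub (fun t ht _ => hf0 t ht (x t))
    have hhalf : (4 / ν') * Real.sqrt (T * Real.log (2 * m * T))
        = 2 * ((2 / ν') * Real.sqrt (T * Real.log (2 * m * T))) := by ring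
    linarith [hsumd, hd2, hmain]
  -- conclude via the supremum
  have hsup : (⨆ x' : X, ∑ t ∈ Finset.Icc 1 T, f t x')
      ≤ (∑ t ∈ Finset.Icc 1 T, f t (x t)
        + (2 / (β + ρ) + (4 / ν') * Real.sqrt (T * Real.log (2 * m * T)) + (4 / ν') * EP)) / α :=
    ciSup_le fun x' => (le_div_iff₀ hα0).mpr (by linarith [key x'])
  have hfin := mul_le_mul_of_nonneg_left hsup hα0.le
  have hcancel : α * ((∑ t ∈ Finset.Icc 1 T, f t (x t)
        + (2 / (β + ρ) + (4 / ν') * Real.sqrt (T * Real.log (2 * m * T)) + (4 / ν') * EP)) / α)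
      = ∑ t ∈ Finset.Icc 1 T, f t (x t)
        + (2 / (β + ρ) + (4 / ν') * Real.sqrt (T * Real.log (2 * m * T)) + (4 / ν') * EP) := by
    field_simp
  rw [hcancel] at hfin
  linarith
end

section
/- Lemma (boundedness of the Lagrange multipliers under OGD duals, Lemma 5.4, adversarial case). There exist absolute constants k₀, k₁, k₂ > 0 such that the following holds. Let K ≤ T and consider rounds k = 1,…,K (the subsequence of rounds in which the regret minimizers are invoked) with rewards f_k : X → [0,1], costs c_k : X → [−1,1]^m satisfying c_{k,i}(x₀) ≤ −β for every i ∈ [m], actions x_k ∈ X, and dual multipliers generated by online gradient ascent on ℝ_{≥0}^m: λ_1 = 0 and λ_{k+1,i} = max(0, λ_{k,i} + η·(c_{k,i}(x_k) − ρ)) for each i, with step size η = ( k₁·E + k₂·m·E_P + 2m·√T )^{−1} for some E ≥ 0 and E_P ≥ 0. Assume the primal regret minimizer satisfies the weakly-adaptive guarantee with unknown payoff range (Assumption 5.1): for every interval [k₁',k₂'] ⊆ [K] and every L > 0 such that |f_k(x) + ⟨λ_k, ρ·𝟙 − c_k(x)⟩| ≤ L for all x ∈ X and all k ∈ [k₁',k₂'],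 it holds that for every x ∈ X and p ∈ [0,1], p·∑_{k=k₁'}^{k₂'} ( f_k(x) + ⟨λ_k, ρ·𝟙 − c_k(x)⟩ ) + (1−p)·∑_{k=k₁'}^{k₂'} ( f_k(x₀) + ⟨λ_k, ρ·𝟙 − c_k(x₀)⟩ ) − ∑_{k=k₁'}^{k₂'} ( f_k(x_k) + ⟨λ_k, ρ·𝟙 − c_k(x_k)⟩ ) ≤ L²·E_P. Then ‖λ_k‖₁ ≤ k₀·m/ν for every k ∈ [K]. -/
set_option maxHeartbeats 1000000

private lemma sum_tele_aux (g w : ℕ → ℝ) : ∀ hi lo : ℕ, lo ≤ hi + 1 →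
    (∀ k, lo ≤ k → k ≤ hi → w k ≤ g k - g (k + 1)) →
    ∑ k ∈ Finset.Icc lo hi, w k ≤ g lo - g (hi + 1) := by
  intro hi
  induction hi with
  | zero =>
    intro lo hlo h
    interval_cases lo
    · simpa using h 0 le_rfl le_rfl
    · simp
  | succ n ih =>
    intro lo hlo h
    rcases Nat.lt_or_ge n lo with hc | hc
    · rcases Nat.lt_or_ge (n + 1) lo with hc2 | hc2
      · have : lo = n + 2 := le_antisymm hlo hc2
        subst this
        simp
      · have : lo = n + 1 := le_antisymm hc2 hc
        subst this
        simpa using h (n + 1) le_rfl le_rfl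
    · rw [Finset.sum_Icc_succ_top (by omega : lo ≤ n + 1)]
      have h1 := ih lo (by omega) (fun k hk1 hk2 => h k hk1 (by omega))
      have h2 := h (n + 1) (by omega) le_rfl
      linarith

private lemma numeric_aux (mr ν : ℝ) (h1 : 1 ≤ mr) (h2 : 0 < ν) (h3 : ν ≤ 2) :
    mr * (4 / ν + 1) ^ 2 + (1 + 2 * (9 * mr / ν)) ^ 2 / 16 ≤ (9 * mr / ν) ^ 2 := by
  have hnum : 16 * mr * (4 + ν) ^ 2 + (ν + 18 * mr) ^ 2 - 16 * (9 * mr) ^ 2 ≤ 0 := by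
    nlinarith [sq_nonneg (mr - 1), sq_nonneg ν, mul_nonneg (sub_nonneg.mpr h1) h2.le,
      mul_le_mul_of_nonneg_right h3 (by linarith : (0:ℝ) ≤ mr)]
  have hid : mr * (4 / ν + 1) ^ 2 + (1 + 2 * (9 * mr / ν)) ^ 2 / 16 - (9 * mr / ν) ^ 2
      = (16 * mr * (4 + ν) ^ 2 + (ν + 18 * mr) ^ 2 - 16 * (9 * mr) ^ 2) / (16 * ν ^ 2) := by
    field_simp
    ring
  have hden : (0:ℝ) < 16 * ν ^ 2 := by positivity
  have := div_nonpos_of_nonpos_of_nonneg hnum hden.le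
  linarith [hid ▸ this]

private lemma ogd_sq_step (lamv cv ρ η : ℝ) (hc1 : -1 ≤ cv) (hc2 : cv ≤ 1)
    (hρ0 : 0 < ρ) (hρ1 : ρ ≤ 1) :
    (max 0 (lamv + η * (cv - ρ))) ^ 2 ≤ lamv ^ 2 + 2 * η * (lamv * (cv - ρ)) + 4 * η ^ 2 := by
  have hcr : (cv - ρ) ^ 2 ≤ 4 := by nlinarith
  have hcr' : η ^ 2 * (cv - ρ) ^ 2 ≤ η ^ 2 * 4 := mul_le_mul_of_nonneg_left hcr (sq_nonneg η)
  rcases le_total (lamv + η * (cv - ρ)) 0 with h | h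
  · rw [max_eq_left h]
    nlinarith [sq_nonneg (lamv + η * (cv - ρ))]
  · rw [max_eq_right h]
    nlinarith

/-- Lemma 5.4 (boundedness of the Lagrange multipliers under OGD duals, adversarial case).
There exist absolute constants `k₀, k₁, k₂ > 0` such that for any `K ≤ T` rounds with
rewards in `[0,1]`, costs in `[−1,1]^m` with `c_{k,i}(x₀) ≤ −β`, dual multipliers produced
by projected online gradient ascent on `ℝ_{≥0}^m` starting from `0` with step size
`η = (k₁·E + k₂·m·E_P + 2m·√T)⁻¹`, and a primal regret minimizer with the weakly-adaptive
guarantee with unknown payoff range (Assumption 5.1), the multipliers satisfy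
`‖λ_k‖₁ ≤ k₀·m/ν` for every `k ∈ [K]`. -/
theorem stmt_10 :
    ∃ k₀ k₁ k₂ : ℝ, 0 < k₀ ∧ 0 < k₁ ∧ 0 < k₂ ∧
      ∀ (T m K : ℕ), 1 ≤ T → 1 ≤ m → K ≤ T →
      ∀ (X : Type) (_ : Nonempty X) (x₀ : X)
        (β ρ : ℝ), 0 ≤ β → 0 < ρ → ρ ≤ 1 →
      ∀ (f : ℕ → X → ℝ),
        (∀ k ∈ Finset.Icc 1 K, ∀ x, 0 ≤ f k x) →
        (∀ k ∈ Finset.Icc 1 K, ∀ x, f k x ≤ 1) →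
      ∀ (c : ℕ → X → Fin m → ℝ),
        (∀ k ∈ Finset.Icc 1 K, ∀ x i, |c k x i| ≤ 1) →
        (∀ k ∈ Finset.Icc 1 K, ∀ i, c k x₀ i ≤ -β) →
      ∀ (x : ℕ → X) (lam : ℕ → Fin m → ℝ)
        (E EP η : ℝ), 0 ≤ E → 0 ≤ EP →
        η = (k₁ * E + k₂ * m * EP + 2 * m * Real.sqrt T)⁻¹ →
        -- OGD duals: λ₁ = 0 and projected gradient steps
        (∀ i, lam 1 i = 0) →
        (∀ k ∈ Finset.Icc 1 K, ∀ i,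
          lam (k + 1) i = max 0 (lam k i + η * (c k (x k) i - ρ))) →
        -- weakly-adaptive primal regret with unknown payoff range (Assumption 5.1)
        (∀ a b : ℕ, 1 ≤ a → a ≤ b → b ≤ K → ∀ L : ℝ, 0 < L →
          (∀ k ∈ Finset.Icc a b, ∀ x' : X,
            |f k x' + ∑ i, lam k i * (ρ - c k x' i)| ≤ L) →
          ∀ x' : X, ∀ p : ℝ, 0 ≤ p → p ≤ 1 →
            p * (∑ k ∈ Finset.Icc a b, (f k x' + ∑ i, lam k i * (ρ - c k x' i)))
              + (1 - p) * (∑ k ∈ Finset.Icc a b,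
                  (f k x₀ + ∑ i, lam k i * (ρ - c k x₀ i)))
              - ∑ k ∈ Finset.Icc a b,
                  (f k (x k) + ∑ i, lam k i * (ρ - c k (x k) i)) ≤ L ^ 2 * EP) →
      ∀ k ∈ Finset.Icc 1 K, (∑ i, lam k i) ≤ k₀ * m / (β + ρ) := by
  classical
  refine ⟨9, 1, 32, by norm_num, by norm_num, by norm_num, ?_⟩
  intro T m K hT hm hKT X _hX x₀ β ρ hβ0 hρ0 hρ1 f hf0 hf1 c hcabs hcx0 x lam E EP η
    hE0 hEP0 hηdef hlam1 hstep hreg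
  by_contra hcon
  push_neg at hcon
  obtain ⟨t0, ht0mem, ht0gt⟩ := hcon
  have hν0 : (0:ℝ) < β + ρ := by linarith
  have hm1 : (1:ℝ) ≤ (m:ℝ) := by exact_mod_cast hm
  have hm0 : (0:ℝ) < (m:ℝ) := by linarith
  set S : ℕ → ℝ := fun k => ∑ i, lam k i with hSdef
  set Q : ℕ → ℝ := fun k => ∑ i, (lam k i) ^ 2 with hQdef
  have hS : ∀ k, S k = ∑ i, lam k i := fun k => rfl
  have hQ : ∀ k, Q k = ∑ i, (lam k i) ^ 2 := fun k => rfl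
  clear_value S Q
  set B : ℝ := 9 * (m:ℝ) / (β + ρ) with hBdef
  set θ : ℝ := 4 / (β + ρ) with hθdef
  have hB0 : (0:ℝ) < B := by rw [hBdef]; positivity
  have hθ0 : (0:ℝ) < θ := by rw [hθdef]; positivity
  clear_value B θ
  -- minimal counterexample t
  have hPex : ∃ t, t ∈ Finset.Icc 1 K ∧ B < S t := ⟨t0, ht0mem, by rw [hS]; exact ht0gt⟩
  set t := Nat.find hPex with htdef
  obtain ⟨htmem, htgt⟩ := Nat.find_spec hPex
  rw [← htdef] at htmem htgt
  have hmint : ∀ s, s < t → s ∈ Finset.Icc 1 K → S s ≤ B := by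
    intro s hs hsmem
    by_contra h
    exact Nat.find_min hPex hs ⟨hsmem, lt_of_not_ge h⟩
  obtain ⟨ht1, htK⟩ := Finset.mem_Icc.mp htmem
  clear_value t
  have hK1 : 1 ≤ K := le_trans ht1 htK
  have h1K : (1:ℕ) ∈ Finset.Icc 1 K := Finset.mem_Icc.mpr ⟨le_rfl, hK1⟩
  have hν2 : β + ρ ≤ 2 := by
    have h1 := abs_le.mp (hcabs 1 h1K x₀ ⟨0, hm⟩)
    have h2 := hcx0 1 h1K ⟨0, hm⟩
    linarith [h1.1]
  -- eta facts
  have hsq1 : (1:ℝ) ≤ Real.sqrt T := by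
    rw [show (1:ℝ) = Real.sqrt 1 by simp]
    exact Real.sqrt_le_sqrt (by exact_mod_cast hT)
  have hEPm : (0:ℝ) ≤ 32 * (m:ℝ) * EP := by positivity
  have h2m : (2:ℝ) * m ≤ 2 * m * Real.sqrt T := by nlinarith
  have hden0 : (0:ℝ) < 1 * E + 32 * (m:ℝ) * EP + 2 * m * Real.sqrt T := by nlinarith
  have hη0 : 0 < η := by rw [hηdef]; exact inv_pos.mpr hden0
  have hηD : η * (1 * E + 32 * (m:ℝ) * EP + 2 * m * Real.sqrt T) = 1 := by
    rw [hηdef]; exact inv_mul_cancel₀ hden0.ne'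
  have hη2m : 2 * (m:ℝ) * η ≤ 1 := by
    have h1 : 2 * (m:ℝ) ≤ 1 * E + 32 * (m:ℝ) * EP + 2 * m * Real.sqrt T := by nlinarith
    nlinarith [mul_le_mul_of_nonneg_right h1 hη0.le]
  have hηEP : 2 * (m:ℝ) * η * EP ≤ 1 / 16 := by
    have h1 : 32 * (m:ℝ) * EP ≤ 1 * E + 32 * (m:ℝ) * EP + 2 * m * Real.sqrt T := by nlinarith
    nlinarith [mul_le_mul_of_nonneg_right h1 hη0.le]
  -- nonnegativity of the multipliers
  have hlamnn : ∀ k, 1 ≤ k → k ≤ K + 1 → ∀ i, 0 ≤ lam k i := by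
    intro k hk1 hk2 i
    rcases Nat.lt_or_ge k 2 with h | h
    · have hk : k = 1 := by omega
      subst hk
      simp [hlam1]
    · obtain ⟨j, rfl⟩ : ∃ j, k = j + 1 := ⟨k - 1, by omega⟩
      rw [hstep j (Finset.mem_Icc.mpr ⟨by omega, by omega⟩) i]
      exact le_max_left _ _
  -- per-coordinate step bound
  have hcoordstep : ∀ k, k ∈ Finset.Icc 1 K → ∀ i, lam (k + 1) i ≤ lam k i + 2 * η := by
    intro k hk i
    obtain ⟨hk1, hk2⟩ := Finset.mem_Icc.mp hk
    rw [hstep k hk i]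
    have hc := abs_le.mp (hcabs k hk (x k) i)
    have hnn := hlamnn k hk1 (by omega) i
    apply max_le (by linarith)
    nlinarith [hη0.le]
  have hSstep : ∀ k, k ∈ Finset.Icc 1 K → S (k + 1) ≤ S k + 2 * m * η := by
    intro k hk
    calc S (k + 1) = ∑ i, lam (k + 1) i := hS _
      _ ≤ ∑ i, (lam k i + 2 * η) :=
          Finset.sum_le_sum (fun i _ => hcoordstep k hk i)
      _ = S k + (m:ℝ) * (2 * η) := by
          rw [Finset.sum_add_distrib, Finset.sum_const, Finset.card_univ, Fintype.card_fin,
            nsmul_eq_mul, hS]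
      _ = S k + 2 * m * η := by ring
  have hS1 : S 1 = 0 := by rw [hS]; exact Finset.sum_eq_zero (fun i _ => hlam1 i)
  have ht2 : 2 ≤ t := by
    by_contra h
    have htt : t = 1 := by omega
    rw [htt, hS1] at htgt
    linarith
  -- last time the multiplier sum was below θ
  set a := Nat.findGreatest (fun s => S s ≤ θ) (t - 1) with hadef
  have hP1 : S 1 ≤ θ := by rw [hS1]; linarith
  have ha1 : 1 ≤ a := by
    rw [hadef]
    exact Nat.le_findGreatest (P := fun s => S s ≤ θ) (by omega) hP1
  have haT : a ≤ t - 1 := by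
    rw [hadef]
    exact Nat.findGreatest_le _
  have haS : S a ≤ θ := by
    rw [hadef]
    exact Nat.findGreatest_spec (P := fun s => S s ≤ θ) (m := 1) (by omega) hP1
  have hgtθ : ∀ k, a < k → k ≤ t - 1 → θ < S k := by
    intro k hh1 hh2
    rw [hadef] at hh1
    exact lt_of_not_ge (Nat.findGreatest_is_greatest hh1 hh2)
  clear_value a
  have haK : a ∈ Finset.Icc 1 K := Finset.mem_Icc.mpr ⟨ha1, by omega⟩
  have hSa1 : S (a + 1) ≤ θ + 1 := by
    have h1 := hSstep a haK
    linarith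
  have hθ1B : θ + 1 ≤ B := by
    rw [hθdef, hBdef, div_add' _ _ _ hν0.ne', div_le_div_iff₀ hν0 hν0]
    nlinarith
  rcases eq_or_lt_of_le (show a + 1 ≤ t by omega) with hcase | hcase
  · -- t = a + 1 : immediate contradiction
    rw [hcase] at hSa1
    linarith
  -- main case : a + 1 ≤ t - 1
  set b := t - 1 with hbdef
  have hb1 : b + 1 = t := by omega
  have hab : a + 1 ≤ b := by omega
  have hbK : b ≤ K := by omega
  set L : ℝ := 1 + 2 * B with hLdef
  have hL0 : (0:ℝ) < L := by rw [hLdef]; linarith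
  clear_value L
  have hIK : ∀ k, k ∈ Finset.Icc (a + 1) b → k ∈ Finset.Icc 1 K := by
    intro k hk
    obtain ⟨hk1, hk2⟩ := Finset.mem_Icc.mp hk
    exact Finset.mem_Icc.mpr ⟨by omega, by omega⟩
  have hSkB : ∀ k, k ∈ Finset.Icc (a + 1) b → S k ≤ B := by
    intro k hk
    obtain ⟨hk1, hk2⟩ := Finset.mem_Icc.mp hk
    exact hmint k (by omega) (hIK k hk)
  -- payoff range bound
  have hbound : ∀ k ∈ Finset.Icc (a + 1) b, ∀ x' : X,
      |f k x' + ∑ i, lam k i * (ρ - c k x' i)| ≤ L := by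
    intro k hk x'
    have hkK := hIK k hk
    obtain ⟨hk1, hk2⟩ := Finset.mem_Icc.mp hkK
    have habs : |∑ i, lam k i * (ρ - c k x' i)| ≤ 2 * S k := by
      calc |∑ i, lam k i * (ρ - c k x' i)| ≤ ∑ i, |lam k i * (ρ - c k x' i)| :=
            Finset.abs_sum_le_sum_abs _ _
        _ ≤ ∑ i, lam k i * 2 := by
            apply Finset.sum_le_sum
            intro i _
            have hnn := hlamnn k hk1 (by omega) i
            have hc := abs_le.mp (hcabs k hkK x' i)
            rw [abs_mul, abs_of_nonneg hnn]
            apply mul_le_mul_of_nonneg_left _ hnn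
            rw [abs_le]
            constructor <;> linarith
        _ = 2 * S k := by rw [← Finset.sum_mul, hS]; ring
    have h1 := hf0 k hkK x'
    have h2 := hf1 k hkK x'
    have h3 := hSkB k hk
    have h4 := abs_le.mp habs
    rw [abs_le, hLdef]
    constructor <;> linarith
  -- apply the primal regret guarantee with comparator x₀ and p = 0
  have hR := hreg (a + 1) b (by omega) hab hbK L hL0 hbound x₀ 0 le_rfl zero_le_one
  have hR' : (∑ k ∈ Finset.Icc (a + 1) b, (f k x₀ + ∑ i, lam k i * (ρ - c k x₀ i)))
      - ∑ k ∈ Finset.Icc (a + 1) b, (f k (x k) + ∑ i, lam k i * (ρ - c k (x k) i))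
      ≤ L ^ 2 * EP := by linarith
  -- lower bound for the x₀ term
  have hlow : ∑ k ∈ Finset.Icc (a + 1) b, (β + ρ) * S k
      ≤ ∑ k ∈ Finset.Icc (a + 1) b, (f k x₀ + ∑ i, lam k i * (ρ - c k x₀ i)) := by
    apply Finset.sum_le_sum
    intro k hk
    have hkK := hIK k hk
    obtain ⟨hk1, hk2⟩ := Finset.mem_Icc.mp hkK
    have h1 : ∑ i, lam k i * (β + ρ) ≤ ∑ i, lam k i * (ρ - c k x₀ i) := by
      apply Finset.sum_le_sum
      intro i _
      exact mul_le_mul_of_nonneg_left (by linarith [hcx0 k hkK i]) (hlamnn k hk1 (by omega) i)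
    have h2 : (β + ρ) * S k = ∑ i, lam k i * (β + ρ) := by
      rw [← Finset.sum_mul, hS]; ring
    linarith [hf0 k hkK x₀]
  -- split the path term
  have hsplit : ∑ k ∈ Finset.Icc (a + 1) b, (f k (x k) + ∑ i, lam k i * (ρ - c k (x k) i))
      = (∑ k ∈ Finset.Icc (a + 1) b, f k (x k))
        + ∑ k ∈ Finset.Icc (a + 1) b, ∑ i, lam k i * (ρ - c k (x k) i) :=
    Finset.sum_add_distrib
  set N : ℝ := ((Finset.Icc (a + 1) b).card : ℝ) with hNdef
  have hN0 : (0:ℝ) ≤ N := by rw [hNdef]; positivity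
  clear_value N
  have hpathf : ∑ k ∈ Finset.Icc (a + 1) b, f k (x k) ≤ N := by
    calc ∑ k ∈ Finset.Icc (a + 1) b, f k (x k) ≤ ∑ k ∈ Finset.Icc (a + 1) b, (1:ℝ) :=
          Finset.sum_le_sum (fun k hk => hf1 k (hIK k hk) (x k))
      _ = N := by rw [Finset.sum_const, nsmul_eq_mul, mul_one, hNdef]
  -- OGD telescoping bound
  have hQle : ∀ k, a + 1 ≤ k → k ≤ b →
      2 * η * (∑ i, lam k i * (ρ - c k (x k) i)) - 4 * η ^ 2 * m ≤ Q k - Q (k + 1) := by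
    intro k hk1 hk2
    have hkK : k ∈ Finset.Icc 1 K := Finset.mem_Icc.mpr ⟨by omega, by omega⟩
    have hper : ∀ i, (lam (k + 1) i) ^ 2
        ≤ (lam k i) ^ 2 + 2 * η * (lam k i * (c k (x k) i - ρ)) + 4 * η ^ 2 := by
      intro i
      rw [hstep k hkK i]
      have hc := abs_le.mp (hcabs k hkK (x k) i)
      exact ogd_sq_step _ _ _ _ hc.1 hc.2 hρ0 hρ1
    have hsum : Q (k + 1) ≤ Q k + 2 * η * (∑ i, lam k i * (c k (x k) i - ρ)) + 4 * η ^ 2 * m := by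
      calc Q (k + 1) = ∑ i, (lam (k + 1) i) ^ 2 := hQ _
        _ ≤ ∑ i, ((lam k i) ^ 2 + 2 * η * (lam k i * (c k (x k) i - ρ)) + 4 * η ^ 2) :=
            Finset.sum_le_sum (fun i _ => hper i)
        _ = Q k + 2 * η * (∑ i, lam k i * (c k (x k) i - ρ)) + 4 * η ^ 2 * m := by
            rw [Finset.sum_add_distrib, Finset.sum_add_distrib, Finset.sum_const,
              Finset.card_univ, Fintype.card_fin, nsmul_eq_mul, ← Finset.mul_sum, hQ]
            ring
    have hflip : (∑ i, lam k i * (ρ - c k (x k) i))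
        = -∑ i, lam k i * (c k (x k) i - ρ) := by
      rw [← Finset.sum_neg_distrib]
      exact Finset.sum_congr rfl (fun i _ => by ring)
    rw [hflip]
    linarith
  have htele := sum_tele_aux Q
    (fun k => 2 * η * (∑ i, lam k i * (ρ - c k (x k) i)) - 4 * η ^ 2 * m) b (a + 1)
    (by omega) hQle
  have htele' : 2 * η * (∑ k ∈ Finset.Icc (a + 1) b, ∑ i, lam k i * (ρ - c k (x k) i))
      - N * (4 * η ^ 2 * m) ≤ Q (a + 1) - Q (b + 1) := by
    have hexp : ∑ k ∈ Finset.Icc (a + 1) b,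
        (2 * η * (∑ i, lam k i * (ρ - c k (x k) i)) - 4 * η ^ 2 * m)
        = 2 * η * (∑ k ∈ Finset.Icc (a + 1) b, ∑ i, lam k i * (ρ - c k (x k) i))
          - N * (4 * η ^ 2 * m) := by
      rw [Finset.sum_sub_distrib, ← Finset.mul_sum, Finset.sum_const, nsmul_eq_mul, hNdef]
    linarith [hexp ▸ htele]
  -- each round in the band contributes at least 4
  have hband : 4 * N ≤ ∑ k ∈ Finset.Icc (a + 1) b, (β + ρ) * S k := by
    have h4 : ∀ k ∈ Finset.Icc (a + 1) b, (4:ℝ) ≤ (β + ρ) * S k := by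
      intro k hk
      obtain ⟨hk1, hk2⟩ := Finset.mem_Icc.mp hk
      have hθk : θ < S k := hgtθ k (by omega) (by omega)
      have : (β + ρ) * θ = 4 := by rw [hθdef]; field_simp
      nlinarith
    calc 4 * N = ∑ k ∈ Finset.Icc (a + 1) b, (4:ℝ) := by
          rw [Finset.sum_const, nsmul_eq_mul, hNdef]; ring
      _ ≤ _ := Finset.sum_le_sum h4
  -- combine everything : Q (b+1) ≤ Q (a+1) + 2 η L² EP
  have hSD : 3 * N - L ^ 2 * EP
      ≤ ∑ k ∈ Finset.Icc (a + 1) b, ∑ i, lam k i * (ρ - c k (x k) i) := by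
    linarith [hsplit ▸ hR']
  have hηN : (0:ℝ) ≤ η * N := mul_nonneg hη0.le hN0
  have h3' : 2 * η * (3 * N - L ^ 2 * EP)
      ≤ 2 * η * (∑ k ∈ Finset.Icc (a + 1) b, ∑ i, lam k i * (ρ - c k (x k) i)) :=
    mul_le_mul_of_nonneg_left hSD (by positivity)
  have h4' : N * (4 * η ^ 2 * m) ≤ N * (2 * η) := by
    apply mul_le_mul_of_nonneg_left _ hN0
    linarith [mul_le_mul_of_nonneg_left hη2m hη0.le]
  have hQb : Q (b + 1) ≤ Q (a + 1) + 2 * η * L ^ 2 * EP := by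
    linarith [htele', h3', h4', hηN]
  -- the EP contribution is at most L²/16m-scaled
  have hEPterm : 2 * η * L ^ 2 * EP ≤ L ^ 2 * (1 / (16 * (m:ℝ))) := by
    have h1 : 2 * η * EP ≤ 1 / (16 * (m:ℝ)) := by
      rw [le_div_iff₀ (by positivity : (0:ℝ) < 16 * (m:ℝ))]
      linarith [hηEP]
    linarith [mul_le_mul_of_nonneg_right h1 (sq_nonneg L)]
  -- Cauchy-Schwarz and the quadratic bound on Q (a+1)
  have hCS : S (b + 1) ^ 2 ≤ (m:ℝ) * Q (b + 1) := by
    have h := sq_sum_le_card_mul_sum_sq (s := (Finset.univ : Finset (Fin m))) (f := lam (b + 1))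
    simpa [Finset.card_univ, hS, hQ] using h
  have hQa : Q (a + 1) ≤ (θ + 1) ^ 2 := by
    have h1 : Q (a + 1) ≤ (S (a + 1)) ^ 2 := by
      rw [hS, hQ]
      exact Finset.sum_sq_le_sq_sum_of_nonneg (fun i _ => hlamnn (a + 1) (by omega) (by omega) i)
    have hSnn : 0 ≤ S (a + 1) := by
      rw [hS]
      exact Finset.sum_nonneg (fun i _ => hlamnn (a + 1) (by omega) (by omega) i)
    have h2 : (S (a + 1)) ^ 2 ≤ (θ + 1) ^ 2 := pow_le_pow_left₀ hSnn hSa1 2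
    linarith
  -- final contradiction
  have hBS : B ^ 2 < S (b + 1) ^ 2 := by
    rw [hb1]
    exact pow_lt_pow_left₀ htgt hB0.le two_ne_zero
  have hQb2 : Q (b + 1) ≤ (θ + 1) ^ 2 + L ^ 2 * (1 / (16 * (m:ℝ))) := by
    linarith [hQb, hEPterm, hQa]
  have hmQ := mul_le_mul_of_nonneg_left hQb2 hm0.le
  have hm16 : (m:ℝ) * ((θ + 1) ^ 2 + L ^ 2 * (1 / (16 * (m:ℝ))))
      = (m:ℝ) * (θ + 1) ^ 2 + L ^ 2 / 16 := by
    field_simp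
  rw [hm16] at hmQ
  have hnum := numeric_aux m (β + ρ) hm1 hν0 hν2
  rw [← hθdef, ← hBdef, ← hLdef] at hnum
  linarith [hnum, hCS, hBS, hmQ]
end

section
/- Lemma (primal utility on rounds with large multipliers, inequality (intermediate1)). Let S be a finite set of rounds such that ‖λ_t‖₁ ≥ 1/ν for every t ∈ S, and suppose R ≥ 0 satisfies the primal regret bound against the void action on S: ∑_{t∈S} ( f_t(x₀) + ⟨λ_t, ρ·𝟙 − c_t(x₀)⟩ ) − ∑_{t∈S} ( f_t(x_t) + ⟨λ_t, ρ·𝟙 − c_t(x_t)⟩ ) ≤ R. Then ∑_{t∈S} ( f_t(x_t) + ⟨λ_t, ρ·𝟙 − c_t(x_t)⟩ ) ≥ |S| − R. -/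
/-! Since `c_t(x₀) ≤ -β`, the void action earns at least `ν ‖λ_t‖₁ ≥ 1` of Lagrangian utility
in each round of `S`, hence at least `|S|` over `S`; the regret bound transfers this to the
played actions up to `R`. -/

open Finset

theorem mul_sum_le_sum_mul_sub_of_le_neg {ι : Type*} [Fintype ι] {β ρ : ℝ} {lam c : ι → ℝ}
    (hlam : ∀ i, 0 ≤ lam i) (hc : ∀ i, c i ≤ -β) :
    (β + ρ) * ∑ i, lam i ≤ ∑ i, lam i * (ρ - c i) := by
  rw [mul_sum]
  refine sum_le_sum fun i _ ↦ ?_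
  rw [mul_comm]
  exact mul_le_mul_of_nonneg_left (by linarith [hc i]) (hlam i)

theorem one_le_add_sum_mul_sub_of_le_neg {ι : Type*} [Fintype ι] {β ρ a : ℝ} {lam c : ι → ℝ}
    (hν : 0 < β + ρ) (ha : 0 ≤ a) (hlam : ∀ i, 0 ≤ lam i) (hc : ∀ i, c i ≤ -β)
    (hbig : 1 / (β + ρ) ≤ ∑ i, lam i) :
    1 ≤ a + ∑ i, lam i * (ρ - c i) := by
  have hnorm : 1 ≤ (β + ρ) * ∑ i, lam i := by rwa [div_le_iff₀' hν] at hbig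
  linarith [mul_sum_le_sum_mul_sub_of_le_neg (ρ := ρ) hlam hc]

theorem stmt_14_general (T m : ℕ)
    (X : Type*) (x₀ : X)
    (β ρ : ℝ) (hβ : 0 ≤ β) (hρ0 : 0 < ρ)
    (f : ℕ → X → ℝ)
    (hf0 : ∀ t ∈ Finset.Icc 1 T, ∀ x, 0 ≤ f t x)
    (c : ℕ → X → Fin m → ℝ)
    (hcx₀ : ∀ t ∈ Finset.Icc 1 T, ∀ i, c t x₀ i ≤ -β)
    (x : ℕ → X) (lam : ℕ → Fin m → ℝ)
    (hlam : ∀ t ∈ Finset.Icc 1 T, ∀ i, 0 ≤ lam t i)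
    (S : Finset ℕ) (hS : S ⊆ Finset.Icc 1 T)
    (hbig : ∀ t ∈ S, 1 / (β + ρ) ≤ ∑ i, lam t i)
    (R : ℝ)
    (hreg : ∑ t ∈ S, (f t x₀ + ∑ i, lam t i * (ρ - c t x₀ i))
              - ∑ t ∈ S, (f t (x t) + ∑ i, lam t i * (ρ - c t (x t) i)) ≤ R) :
    ∑ t ∈ S, (f t (x t) + ∑ i, lam t i * (ρ - c t (x t) i)) ≥ (S.card : ℝ) - R := by
  have hν : 0 < β + ρ := by linarith
  have hvoid : (S.card : ℝ) ≤ ∑ t ∈ S, (f t x₀ + ∑ i, lam t i * (ρ - c t x₀ i)) := by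
    simpa using card_nsmul_le_sum S _ 1 fun t ht ↦
      one_le_add_sum_mul_sub_of_le_neg hν (hf0 t (hS ht) x₀) (hlam t (hS ht))
        (hcx₀ t (hS ht)) (hbig t ht)
  linarith

/-- Lemma (primal utility on rounds with large multipliers, inequality (intermediate1)).
Rounds with large multipliers: if `‖λ_t‖₁ ≥ 1/ν` on a finite set `S` of rounds and the
primal regret against the void action on `S` is at most `R`, then the cumulative primal
Lagrangian utility on `S` is at least `|S| - R`. -/
theorem stmt_14 (T m : ℕ) (hT : 1 ≤ T) (hm : 1 ≤ m)
    (X : Type*) [Nonempty X] (x₀ : X)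
    (β ρ : ℝ) (hβ : 0 ≤ β) (hρ0 : 0 < ρ) (hρ1 : ρ ≤ 1)
    (f : ℕ → X → ℝ)
    (hf0 : ∀ t ∈ Finset.Icc 1 T, ∀ x, 0 ≤ f t x)
    (hf1 : ∀ t ∈ Finset.Icc 1 T, ∀ x, f t x ≤ 1)
    (c : ℕ → X → Fin m → ℝ)
    (hc : ∀ t ∈ Finset.Icc 1 T, ∀ x i, |c t x i| ≤ 1)
    (hcx₀ : ∀ t ∈ Finset.Icc 1 T, ∀ i, c t x₀ i ≤ -β)
    (x : ℕ → X) (lam : ℕ → Fin m → ℝ)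
    (hlam : ∀ t ∈ Finset.Icc 1 T, ∀ i, 0 ≤ lam t i)
    (S : Finset ℕ) (hS : S ⊆ Finset.Icc 1 T)
    (hbig : ∀ t ∈ S, 1 / (β + ρ) ≤ ∑ i, lam t i)
    (R : ℝ) (hR : 0 ≤ R)
    (hreg : ∑ t ∈ S, (f t x₀ + ∑ i, lam t i * (ρ - c t x₀ i))
              - ∑ t ∈ S, (f t (x t) + ∑ i, lam t i * (ρ - c t (x t) i)) ≤ R) :
    ∑ t ∈ S, (f t (x t) + ∑ i, lam t i * (ρ - c t (x t) i)) ≥ (S.card : ℝ) - R :=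
  stmt_14_general T m X x₀ β ρ hβ hρ0 f hf0 c hcx₀ x lam hlam S hS hbig R hreg
end
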